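/- arXiv:2508.19723 — 11 statements merged into one kernel-verified Lean document; each statement's English description precedes it below -/
import Mathlib

section
/- If $\mathcal{G} \subseteq 2^{[n]}$ is a family such that $F \cap F' \neq \emptyset$ for all $F, F' \in \mathcal{G}$ and $F \cup F' \neq [n]$ for all $F, F' \in \mathcal{G}$, then $|\mathcal{G}| \leq 2^{n-2}$. -/
/-!
Let `U` and `D` be the families of supersets and of subsets of members of `𝒢`. `U` is an upper
set and still intersecting, so it has at most half of all sets; dually, `D` is a lower set whose
complements form an intersecting family, so it too has at most half of all sets. Since
`𝒢 ⊆ U ∩ D`, the Harris–Kleitman inequality `2 ^ n * #(U ∩ D) ≤ #U * #D` gives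
`#𝒢 ≤ 2 ^ n / 4`.
-/

open Finset

variable {α : Type*} [Fintype α] [DecidableEq α]

def upperClosureFamily (𝒢 : Finset (Finset α)) : Finset (Finset α) := {s | ∃ g ∈ 𝒢, g ⊆ s}

def lowerClosureFamily (𝒢 : Finset (Finset α)) : Finset (Finset α) := {s | ∃ g ∈ 𝒢, s ⊆ g}

section Closures

variable {𝒢 : Finset (Finset α)} {s : Finset α}

@[simp]
theorem mem_upperClosureFamily : s ∈ upperClosureFamily 𝒢 ↔ ∃ g ∈ 𝒢, g ⊆ s := by
  simp [upperClosureFamily]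

@[simp]
theorem mem_lowerClosureFamily : s ∈ lowerClosureFamily 𝒢 ↔ ∃ g ∈ 𝒢, s ⊆ g := by
  simp [lowerClosureFamily]

theorem isUpperSet_upperClosureFamily : IsUpperSet (upperClosureFamily 𝒢 : Set (Finset α)) := by
  rintro s t hst hs
  obtain ⟨g, hg, hgs⟩ := mem_upperClosureFamily.1 hs
  exact mem_upperClosureFamily.2 ⟨g, hg, hgs.trans hst⟩

theorem isLowerSet_lowerClosureFamily : IsLowerSet (lowerClosureFamily 𝒢 : Set (Finset α)) := by
  rintro s t hts hs
  obtain ⟨g, hg, hsg⟩ := mem_lowerClosureFamily.1 hs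
  exact mem_lowerClosureFamily.2 ⟨g, hg, hts.trans hsg⟩

theorem subset_upperClosureFamily_inter_lowerClosureFamily :
    𝒢 ⊆ upperClosureFamily 𝒢 ∩ lowerClosureFamily 𝒢 := fun g hg =>
  mem_inter.2 ⟨mem_upperClosureFamily.2 ⟨g, hg, subset_rfl⟩,
    mem_lowerClosureFamily.2 ⟨g, hg, subset_rfl⟩⟩

theorem image_compl_lowerClosureFamily :
    (lowerClosureFamily 𝒢).image compl = upperClosureFamily (𝒢.image compl) := by
  ext s
  simp only [mem_image, mem_lowerClosureFamily, mem_upperClosureFamily]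
  constructor
  · rintro ⟨t, ⟨g, hg, htg⟩, rfl⟩
    exact ⟨gᶜ, ⟨g, hg, rfl⟩, compl_subset_compl.2 htg⟩
  · rintro ⟨_, ⟨g, hg, rfl⟩, hgs⟩
    exact ⟨sᶜ, ⟨g, hg, compl_le_iff_compl_le.1 hgs⟩, compl_compl s⟩

theorem Set.Intersecting.upperClosureFamily (h𝒢 : (𝒢 : Set (Finset α)).Intersecting) :
    (upperClosureFamily 𝒢 : Set (Finset α)).Intersecting := by
  rintro s hs t ht
  obtain ⟨g, hg, hgs⟩ := mem_upperClosureFamily.1 hs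
  obtain ⟨g', hg', hg't⟩ := mem_upperClosureFamily.1 ht
  exact fun hst => h𝒢 hg hg' (hst.mono hgs hg't)

theorem intersecting_image_compl (h𝒢 : ∀ g ∈ 𝒢, ∀ g' ∈ 𝒢, g ∪ g' ≠ univ) :
    ((𝒢.image compl : Finset (Finset α)) : Set (Finset α)).Intersecting := by
  simp only [coe_image]
  rintro _ ⟨g, hg, rfl⟩ _ ⟨g', hg', rfl⟩ hdisj
  rw [disjoint_iff, ← compl_sup, compl_eq_bot] at hdisj
  exact h𝒢 g hg g' hg' hdisj

theorem two_mul_card_upperClosureFamily_le (h𝒢 : (𝒢 : Set (Finset α)).Intersecting) :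
    2 * #(upperClosureFamily 𝒢) ≤ 2 ^ Fintype.card α := by
  simpa only [Fintype.card_finset] using h𝒢.upperClosureFamily.card_le

theorem two_mul_card_lowerClosureFamily_le (h𝒢 : ∀ g ∈ 𝒢, ∀ g' ∈ 𝒢, g ∪ g' ≠ univ) :
    2 * #(lowerClosureFamily 𝒢) ≤ 2 ^ Fintype.card α := by
  rw [← card_image_of_injective _ compl_injective, image_compl_lowerClosureFamily]
  exact two_mul_card_upperClosureFamily_le (intersecting_image_compl h𝒢)

theorem four_mul_card_le_of_intersecting_of_union_ne_univ
    (hI : (𝒢 : Set (Finset α)).Intersecting) (hU : ∀ g ∈ 𝒢, ∀ g' ∈ 𝒢, g ∪ g' ≠ univ) :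
    4 * #𝒢 ≤ 2 ^ Fintype.card α := by
  set N := 2 ^ Fintype.card α
  have hN : 0 < N := by positivity
  have harris_kleitman : N * #𝒢 ≤ #(upperClosureFamily 𝒢) * #(lowerClosureFamily 𝒢) :=
    (Nat.mul_le_mul_left N (card_le_card subset_upperClosureFamily_inter_lowerClosureFamily)).trans
      (isUpperSet_upperClosureFamily.card_inter_le_finset isLowerSet_lowerClosureFamily)
  have hUD := Nat.mul_le_mul (two_mul_card_upperClosureFamily_le hI)
    (two_mul_card_lowerClosureFamily_le hU)
  refine Nat.le_of_mul_le_mul_left ?_ hN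
  calc N * (4 * #𝒢) = 4 * (N * #𝒢) := by ring
    _ ≤ 4 * (#(upperClosureFamily 𝒢) * #(lowerClosureFamily 𝒢)) := by gcongr
    _ = 2 * #(upperClosureFamily 𝒢) * (2 * #(lowerClosureFamily 𝒢)) := by ring
    _ ≤ N * N := hUD

end Closures

theorem IU_theorem_general (n : ℕ) (G : Finset (Finset (Fin n)))
    (hI : ∀ F ∈ G, ∀ F' ∈ G, (F ∩ F').Nonempty)
    (hU : ∀ F ∈ G, ∀ F' ∈ G, F ∪ F' ≠ Finset.univ) :
    G.card ≤ 2 ^ (n - 2) := by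
  have hG : 4 * #G ≤ 2 ^ n := by
    simpa only [Fintype.card_fin] using four_mul_card_le_of_intersecting_of_union_ne_univ
      (fun F hF F' hF' => not_disjoint_iff_nonempty_inter.2 (hI F hF F' hF')) hU
  rcases n with _ | _ | n
  · rw [pow_zero] at hG; omega
  · rw [pow_one] at hG; omega
  · show #G ≤ 2 ^ n
    rw [pow_succ, pow_succ] at hG
    omega

theorem IU_theorem (n : ℕ) (hn : 2 ≤ n) (G : Finset (Finset (Fin n)))
    (hI : ∀ F ∈ G, ∀ F' ∈ G, (F ∩ F').Nonempty)
    (hU : ∀ F ∈ G, ∀ F' ∈ G, F ∪ F' ≠ Finset.univ) :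
    G.card ≤ 2 ^ (n - 2) :=
  IU_theorem_general n G hI hU
end

section
/- For any IU-family $\mathcal{G} \subseteq 2^{[n]}$ (with $n \geq 4$), the sturdiness satisfies $\beta(\mathcal{G}) \leq 2^{n-4}$, i.e., there exist distinct $i, j \in [n]$ with $|\mathcal{G}(i, \bar{j})| \leq 2^{n-4}$. -/
/-!
Fix `i ≠ j` and put `𝒜 = 𝒢(i, j̄)`, `ℬ = 𝒢(j, ī)`, families on the `m = n - 2` points outside
`{i, j}`. The IU property makes them cross-intersecting and no `A ∪ B` covers all `m` points.
Cross-intersection makes the up-closure of `𝒜` disjoint from the complements of the up-closure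
of `ℬ`, so the two up-closures have at most `2 ^ m` members together; dually for the
down-closures. As `𝒜` lies in the intersection of its up- and down-closure, Harris–Kleitman gives
`2 ^ m |𝒜| ≤ |↑𝒜| |↓𝒜|`, and AM–GM then yields `|𝒜| |ℬ| ≤ 4 ^ (m - 2) = (2 ^ (n - 4)) ^ 2`.
-/

open Finset

namespace Finset

variable {α : Type*} [DecidableEq α]

section Fintype

variable [Fintype α]

theorem card_add_card_le_of_forall_ne_compl {𝒜 ℬ : Finset (Finset α)}
    (h : ∀ A ∈ 𝒜, ∀ B ∈ ℬ, A ≠ Bᶜ) : #𝒜 + #ℬ ≤ 2 ^ Fintype.card α := by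
  have hdisj : Disjoint 𝒜 (ℬ.image compl) := by
    simp only [disjoint_left, mem_image, not_exists, not_and]
    exact fun A hA B hB hBA => h A hA B hB hBA.symm
  calc #𝒜 + #ℬ = #(𝒜 ∪ ℬ.image compl) := by
        rw [card_union_of_disjoint hdisj, card_image_of_injective _ compl_injective]
    _ ≤ 2 ^ Fintype.card α := by
        rw [← Fintype.card_finset]; exact card_le_univ _

def upClosure (𝒜 : Finset (Finset α)) : Finset (Finset α) := {C | ∃ A ∈ 𝒜, A ⊆ C}

def downClosure (𝒜 : Finset (Finset α)) : Finset (Finset α) := {C | ∃ A ∈ 𝒜, C ⊆ A}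

variable {𝒜 ℬ : Finset (Finset α)} {C : Finset α}

@[simp]
theorem mem_upClosure : C ∈ upClosure 𝒜 ↔ ∃ A ∈ 𝒜, A ⊆ C := by simp [upClosure]

@[simp]
theorem mem_downClosure : C ∈ downClosure 𝒜 ↔ ∃ A ∈ 𝒜, C ⊆ A := by simp [downClosure]

theorem isUpperSet_upClosure : IsUpperSet (upClosure 𝒜 : Set (Finset α)) := by
  rintro C D hCD hC
  simp only [mem_coe, mem_upClosure] at hC ⊢
  obtain ⟨A, hA, hAC⟩ := hC
  exact ⟨A, hA, hAC.trans hCD⟩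

theorem isLowerSet_downClosure : IsLowerSet (downClosure 𝒜 : Set (Finset α)) := by
  rintro C D hDC hC
  simp only [mem_coe, mem_downClosure] at hC ⊢
  obtain ⟨A, hA, hCA⟩ := hC
  exact ⟨A, hA, hDC.trans hCA⟩

theorem subset_upClosure_inter_downClosure : 𝒜 ⊆ upClosure 𝒜 ∩ downClosure 𝒜 :=
  fun A hA =>
    mem_inter.2 ⟨mem_upClosure.2 ⟨A, hA, subset_rfl⟩, mem_downClosure.2 ⟨A, hA, subset_rfl⟩⟩

theorem two_pow_mul_card_le_card_upClosure_mul_card_downClosure :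
    2 ^ Fintype.card α * #𝒜 ≤ #(upClosure 𝒜) * #(downClosure 𝒜) :=
  calc 2 ^ Fintype.card α * #𝒜
      ≤ 2 ^ Fintype.card α * #(upClosure 𝒜 ∩ downClosure 𝒜) := by
        gcongr; exact subset_upClosure_inter_downClosure
    _ ≤ #(upClosure 𝒜) * #(downClosure 𝒜) :=
        isUpperSet_upClosure.card_inter_le_finset isLowerSet_downClosure

theorem card_upClosure_add_card_upClosure_le (hI : ∀ A ∈ 𝒜, ∀ B ∈ ℬ, (A ∩ B).Nonempty) :
    #(upClosure 𝒜) + #(upClosure ℬ) ≤ 2 ^ Fintype.card α := by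
  refine card_add_card_le_of_forall_ne_compl fun C hC D hD hCD => ?_
  obtain ⟨A, hA, hAC⟩ := mem_upClosure.1 hC
  obtain ⟨B, hB, hBD⟩ := mem_upClosure.1 hD
  obtain ⟨x, hx⟩ := hI A hA B hB
  rw [mem_inter] at hx
  exact mem_compl.1 (hCD ▸ hAC hx.1) (hBD hx.2)

theorem card_downClosure_add_card_downClosure_le (hU : ∀ A ∈ 𝒜, ∀ B ∈ ℬ, A ∪ B ≠ univ) :
    #(downClosure 𝒜) + #(downClosure ℬ) ≤ 2 ^ Fintype.card α := by
  refine card_add_card_le_of_forall_ne_compl fun C hC D hD hCD => ?_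
  obtain ⟨A, hA, hCA⟩ := mem_downClosure.1 hC
  obtain ⟨B, hB, hDB⟩ := mem_downClosure.1 hD
  refine hU A hA B hB (eq_univ_of_forall fun x => ?_)
  by_cases hx : x ∈ D
  · exact mem_union_right _ (hDB hx)
  · exact mem_union_left _ (hCA (hCD ▸ mem_compl.2 hx))

theorem sixteen_mul_card_mul_card_le (hI : ∀ A ∈ 𝒜, ∀ B ∈ ℬ, (A ∩ B).Nonempty)
    (hU : ∀ A ∈ 𝒜, ∀ B ∈ ℬ, A ∪ B ≠ univ) : 16 * (#𝒜 * #ℬ) ≤ 4 ^ Fintype.card α := by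
  set N := 2 ^ Fintype.card α
  have four_mul_le {x y : ℕ} (h : x + y ≤ N) : 4 * (x * y) ≤ N ^ 2 := by
    rw [← mul_assoc]; exact (four_mul_le_sq_add x y).trans (by gcongr)
  have hup := four_mul_le (card_upClosure_add_card_upClosure_le hI)
  have hdown := four_mul_le (card_downClosure_add_card_downClosure_le hU)
  have h𝒜 := two_pow_mul_card_le_card_upClosure_mul_card_downClosure (𝒜 := 𝒜)
  have hℬ := two_pow_mul_card_le_card_upClosure_mul_card_downClosure (𝒜 := ℬ)
  have hN : 4 ^ Fintype.card α = N ^ 2 := by rw [← pow_mul, mul_comm, pow_mul]; norm_num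
  rw [hN]
  refine Nat.le_of_mul_le_mul_left ?_ (by positivity : 0 < N ^ 2)
  calc N ^ 2 * (16 * (#𝒜 * #ℬ)) = 16 * ((N * #𝒜) * (N * #ℬ)) := by ring
    _ ≤ 16 * ((#(upClosure 𝒜) * #(downClosure 𝒜)) * (#(upClosure ℬ) * #(downClosure ℬ))) := by
        gcongr
    _ = (4 * (#(upClosure 𝒜) * #(upClosure ℬ))) * (4 * (#(downClosure 𝒜) * #(downClosure ℬ))) := by
        ring
    _ ≤ N ^ 2 * N ^ 2 := Nat.mul_le_mul hup hdown

end Fintype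

theorem sixteen_mul_card_mul_card_le_of_subset {𝒜 ℬ : Finset (Finset α)} {s : Finset α}
    (h𝒜 : ∀ A ∈ 𝒜, A ⊆ s) (hℬ : ∀ B ∈ ℬ, B ⊆ s)
    (hI : ∀ A ∈ 𝒜, ∀ B ∈ ℬ, (A ∩ B).Nonempty) (hU : ∀ A ∈ 𝒜, ∀ B ∈ ℬ, A ∪ B ≠ s) :
    16 * (#𝒜 * #ℬ) ≤ 4 ^ #s := by
  let φ : Finset α → Finset s := fun C => C.subtype (· ∈ s)
  have card_image_φ {𝒞 : Finset (Finset α)} (h𝒞 : ∀ C ∈ 𝒞, C ⊆ s) : #(𝒞.image φ) = #𝒞 :=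
    card_image_of_injOn fun C hC D hD hCD => by
      rw [← subtype_map_of_mem (h𝒞 C hC), ← subtype_map_of_mem (h𝒞 D hD)]
      exact congrArg _ hCD
  have key := sixteen_mul_card_mul_card_le (𝒜 := 𝒜.image φ) (ℬ := ℬ.image φ) ?_ ?_
  · rwa [card_image_φ h𝒜, card_image_φ hℬ, Fintype.card_coe] at key
  · simp only [mem_image, forall_exists_index, and_imp, forall_apply_eq_imp_iff₂]
    intro A hA B hB
    obtain ⟨x, hx⟩ := hI A hA B hB
    exact ⟨⟨x, h𝒜 A hA (mem_inter.1 hx).1⟩, by simpa [φ] using hx⟩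
  · simp only [mem_image, forall_exists_index, and_imp, forall_apply_eq_imp_iff₂]
    intro A hA B hB hAB
    refine hU A hA B hB (subset_antisymm (union_subset (h𝒜 A hA) (hℬ B hB)) fun x hx => ?_)
    have hx' : (⟨x, hx⟩ : s) ∈ φ A ∪ φ B := hAB ▸ mem_univ _
    simpa [φ] using hx'

variable {G : Finset (Finset α)} {i j : α} {C : Finset α}

theorem mem_memberSubfamily_nonMemberSubfamily :
    C ∈ (G.nonMemberSubfamily j).memberSubfamily i ↔ insert i C ∈ G ∧ j ∉ insert i C ∧ i ∉ C := by
  simp only [mem_memberSubfamily, mem_nonMemberSubfamily, and_assoc]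

variable [Fintype α]

theorem subset_compl_pair_of_mem_memberSubfamily_nonMemberSubfamily
    (hC : C ∈ (G.nonMemberSubfamily j).memberSubfamily i) : C ⊆ {i, j}ᶜ := by
  rw [mem_memberSubfamily_nonMemberSubfamily] at hC
  intro x hx
  simp only [mem_compl, mem_insert, mem_singleton]
  grind

theorem sixteen_mul_card_memberSubfamily_mul_card_memberSubfamily_le
    (hI : ∀ F ∈ G, ∀ F' ∈ G, (F ∩ F').Nonempty) (hU : ∀ F ∈ G, ∀ F' ∈ G, F ∪ F' ≠ univ)
    (hij : i ≠ j) :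
    16 * (#((G.nonMemberSubfamily j).memberSubfamily i) *
      #((G.nonMemberSubfamily i).memberSubfamily j)) ≤ 4 ^ (Fintype.card α - 2) := by
  rw [← card_pair hij, ← card_compl]
  refine sixteen_mul_card_mul_card_le_of_subset
    (fun C hC => subset_compl_pair_of_mem_memberSubfamily_nonMemberSubfamily hC)
    (fun D hD => pair_comm i j ▸ subset_compl_pair_of_mem_memberSubfamily_nonMemberSubfamily hD)
    (fun C hC D hD => ?_) (fun C hC D hD hCD => ?_)
  · rw [mem_memberSubfamily_nonMemberSubfamily] at hC hD
    obtain ⟨x, hx⟩ := hI _ hC.1 _ hD.1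
    exact ⟨x, by grind⟩
  · rw [mem_memberSubfamily_nonMemberSubfamily] at hC hD
    refine hU _ hC.1 _ hD.1 (eq_univ_of_forall fun x => ?_)
    have := Finset.ext_iff.1 hCD x
    simp only [mem_compl, mem_insert, mem_singleton, mem_union] at this ⊢
    grind

end Finset

theorem sturdiness_IU (n : ℕ) (hn : 4 ≤ n) (G : Finset (Finset (Fin n)))
    (hI : ∀ F ∈ G, ∀ F' ∈ G, (F ∩ F').Nonempty)
    (hU : ∀ F ∈ G, ∀ F' ∈ G, F ∪ F' ≠ Finset.univ) :
    ∃ i j : Fin n, i ≠ j ∧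
      ((G.filter (fun F => i ∈ F ∧ j ∉ F)).image (fun F => F.erase i)).card ≤ 2 ^ (n - 4) := by
  have sturdiness_eq (i j : Fin n) :
      (G.filter (fun F => i ∈ F ∧ j ∉ F)).image (fun F => F.erase i) =
        (G.nonMemberSubfamily j).memberSubfamily i := by
    simp only [memberSubfamily, nonMemberSubfamily, filter_filter, and_comm]
  obtain ⟨i, j, hij⟩ : ∃ i j : Fin n, i ≠ j := ⟨⟨0, by omega⟩, ⟨1, by omega⟩, by simp⟩
  have key := sixteen_mul_card_memberSubfamily_mul_card_memberSubfamily_le hI hU hij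
  have hpow : 4 ^ (n - 2) = 16 * (2 ^ (n - 4) * 2 ^ (n - 4)) := by
    rw [← pow_add, ← two_mul, pow_mul, show n - 2 = 2 + (n - 4) by omega, pow_add]; norm_num
  rw [Fintype.card_fin, hpow, Nat.mul_le_mul_left_iff (by norm_num)] at key
  by_cases hA : #((G.nonMemberSubfamily j).memberSubfamily i) ≤ 2 ^ (n - 4)
  · exact ⟨i, j, hij, sturdiness_eq i j ▸ hA⟩
  · refine ⟨j, i, hij.symm, sturdiness_eq j i ▸ ?_⟩
    by_contra hB
    exact (Nat.mul_lt_mul'' (not_le.1 hA) (not_le.1 hB)).not_ge key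
end

section
/- Let $\mathcal{F}, \mathcal{G} \subseteq 2^{[n]}$ be cross-Sperner families. Then for any $p \in (0,1)$, $\mu_p(\mathcal{F})^{1/2} + \mu_p(\mathcal{G})^{1/2} \leq 1$. -/
open Finset

variable {n : ℕ}

noncomputable def mu (n : ℕ) (p : ℝ) (S : Finset (Fin n)) : ℝ :=
  p ^ S.card * (1 - p) ^ (n - S.card)

lemma mu_nonneg {p : ℝ} (hp0 : 0 < p) (hp1 : p < 1) (S : Finset (Fin n)) :
    0 ≤ mu n p S :=
  mul_nonneg (pow_nonneg hp0.le _) (pow_nonneg (by linarith) _)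

lemma mu_total {p : ℝ} : ∑ S : Finset (Fin n), mu n p S = 1 := by
  have h := Finset.prod_add (fun _ : Fin n => p) (fun _ : Fin n => (1 - p)) Finset.univ
  simp only [prod_const, card_sdiff_of_subset (subset_univ _), card_univ, Fintype.card_fin,
    powerset_univ] at h
  have hpq : p + (1 - p) = 1 := by ring
  rw [hpq, one_pow] at h
  unfold mu
  exact h.symm

lemma mu_supermod {p : ℝ} (a b : Finset (Fin n)) :
    mu n p a * mu n p b ≤ mu n p (a ⊓ b) * mu n p (a ⊔ b) := by
  unfold mu
  refine le_of_eq ?_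
  have h1 : (a ⊓ b).card + (a ⊔ b).card = a.card + b.card :=
    Finset.card_inter_add_card_union a b
  have ha : a.card ≤ n := by simpa using Finset.card_le_card (subset_univ a)
  have hb : b.card ≤ n := by simpa using Finset.card_le_card (subset_univ b)
  have hi : (a ⊓ b).card ≤ n := by simpa using Finset.card_le_card (subset_univ (a ⊓ b))
  have hu : (a ⊔ b).card ≤ n := by simpa using Finset.card_le_card (subset_univ (a ⊔ b))
  have e1 : p ^ a.card * p ^ b.card = p ^ (a ⊓ b).card * p ^ (a ⊔ b).card := by
    rw [← pow_add, ← pow_add, h1]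
  have e2 : (1 - p) ^ (n - a.card) * (1 - p) ^ (n - b.card)
      = (1 - p) ^ (n - (a ⊓ b).card) * (1 - p) ^ (n - (a ⊔ b).card) := by
    rw [← pow_add, ← pow_add]
    congr 1
    omega
  calc p ^ a.card * (1 - p) ^ (n - a.card) * (p ^ b.card * (1 - p) ^ (n - b.card))
      = (p ^ a.card * p ^ b.card) * ((1 - p) ^ (n - a.card) * (1 - p) ^ (n - b.card)) := by ring
    _ = (p ^ (a ⊓ b).card * p ^ (a ⊔ b).card) *
        ((1 - p) ^ (n - (a ⊓ b).card) * (1 - p) ^ (n - (a ⊔ b).card)) := by rw [e1, e2]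
    _ = p ^ (a ⊓ b).card * (1 - p) ^ (n - (a ⊓ b).card) *
        (p ^ (a ⊔ b).card * (1 - p) ^ (n - (a ⊔ b).card)) := by ring

/-- Harris: for an upset U and downset D, μ(U ∩ D) ≤ μ(U) μ(D). -/
lemma harris {p : ℝ} (hp0 : 0 < p) (hp1 : p < 1) (U D : Finset (Finset (Fin n)))
    (hU : ∀ s ∈ U, ∀ t, s ⊆ t → t ∈ U) (hD : ∀ s ∈ D, ∀ t, t ⊆ s → t ∈ D) :
    ∑ S ∈ U ∩ D, mu n p S ≤ (∑ S ∈ U, mu n p S) * (∑ S ∈ D, mu n p S) := by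
  classical
  set f : Finset (Fin n) → ℝ := fun S => if S ∈ U then 1 else 0 with hf
  set g : Finset (Fin n) → ℝ := fun S => if S ∈ D then 0 else 1 with hg
  have hf0 : 0 ≤ f := fun S => by dsimp [f]; split <;> norm_num
  have hg0 : 0 ≤ g := fun S => by dsimp [g]; split <;> norm_num
  have hfm : Monotone f := by
    intro s t hst
    dsimp [f]
    split
    · rw [if_pos (hU s ‹_› t hst)]
    · split <;> norm_num
  have hgm : Monotone g := by
    intro s t hst
    dsimp [g]
    split
    · split <;> norm_num
    · rw [if_neg (fun ht => ‹s ∉ D› (hD t ht s hst))]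
  have key := fkg f g (mu n p) (fun S => mu_nonneg hp0 hp1 S) hf0 hg0 hfm hgm
    (fun a b => mu_supermod a b)
  have eU : ∑ S : Finset (Fin n), mu n p S * f S = ∑ S ∈ U, mu n p S := by
    simp [hf, mul_ite, Finset.sum_ite_mem]
  have eG : ∑ S : Finset (Fin n), mu n p S * g S
      = 1 - ∑ S ∈ D, mu n p S := by
    have : ∀ S : Finset (Fin n), mu n p S * g S
        = mu n p S - mu n p S * (if S ∈ D then 1 else 0) := by
      intro S; dsimp [g]; split <;> ring
    rw [Finset.sum_congr rfl (fun S _ => this S), Finset.sum_sub_distrib, mu_total]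
    simp [mul_ite, Finset.sum_ite_mem]
  have eFG : ∑ S : Finset (Fin n), mu n p S * (f S * g S)
      = (∑ S ∈ U, mu n p S) - ∑ S ∈ U ∩ D, mu n p S := by
    have : ∀ S : Finset (Fin n), mu n p S * (f S * g S)
        = mu n p S * (if S ∈ U then 1 else 0)
          - mu n p S * (if S ∈ U ∩ D then 1 else 0) := by
      intro S; dsimp [f, g]; by_cases h1 : S ∈ U <;> by_cases h2 : S ∈ D <;>
        simp [h1, h2] <;> ring
    rw [Finset.sum_congr rfl (fun S _ => this S), Finset.sum_sub_distrib]
    simp only [mul_ite, mul_one, mul_zero, Finset.sum_ite_mem, Finset.univ_inter]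
  rw [eU, eG, eFG, mu_total, one_mul] at key
  nlinarith [key]

lemma sqrt_bound {p : ℝ} (hp0 : 0 < p) (hp1 : p < 1) (H : Finset (Finset (Fin n))) :
    Real.sqrt (∑ A ∈ H, mu n p A) ≤
      ((∑ S ∈ Finset.univ.filter (fun S => ∃ A ∈ H, A ⊆ S), mu n p S) +
       (∑ S ∈ Finset.univ.filter (fun S => ∃ A ∈ H, S ⊆ A), mu n p S)) / 2 := by
  classical
  set U := Finset.univ.filter (fun S => ∃ A ∈ H, A ⊆ S) with hUdef
  set D := Finset.univ.filter (fun S => ∃ A ∈ H, S ⊆ A) with hDdef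
  have hU : ∀ s ∈ U, ∀ t, s ⊆ t → t ∈ U := by
    intro s hs t hst
    simp only [hUdef, mem_filter, mem_univ, true_and] at hs ⊢
    obtain ⟨A, hA, hAs⟩ := hs
    exact ⟨A, hA, hAs.trans hst⟩
  have hD : ∀ s ∈ D, ∀ t, t ⊆ s → t ∈ D := by
    intro s hs t hts
    simp only [hDdef, mem_filter, mem_univ, true_and] at hs ⊢
    obtain ⟨A, hA, hsA⟩ := hs
    exact ⟨A, hA, hts.trans hsA⟩
  have hHsub : H ⊆ U ∩ D := by
    intro A hA
    simp only [hUdef, hDdef, Finset.mem_inter, mem_filter, mem_univ, true_and]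
    exact ⟨⟨A, hA, subset_rfl⟩, ⟨A, hA, subset_rfl⟩⟩
  have h1 : ∑ A ∈ H, mu n p A ≤ ∑ S ∈ U ∩ D, mu n p S :=
    Finset.sum_le_sum_of_subset_of_nonneg hHsub (fun S _ _ => mu_nonneg hp0 hp1 S)
  have h2 := harris hp0 hp1 U D hU hD
  have hUnn : 0 ≤ ∑ S ∈ U, mu n p S := Finset.sum_nonneg fun S _ => mu_nonneg hp0 hp1 S
  have hDnn : 0 ≤ ∑ S ∈ D, mu n p S := Finset.sum_nonneg fun S _ => mu_nonneg hp0 hp1 S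
  have h3 : Real.sqrt (∑ A ∈ H, mu n p A) ≤
      Real.sqrt ((∑ S ∈ U, mu n p S) * (∑ S ∈ D, mu n p S)) :=
    Real.sqrt_le_sqrt (h1.trans h2)
  refine h3.trans ?_
  rw [Real.sqrt_mul hUnn]
  nlinarith [Real.sq_sqrt hUnn, Real.sq_sqrt hDnn,
    sq_nonneg (Real.sqrt (∑ S ∈ U, mu n p S) - Real.sqrt (∑ S ∈ D, mu n p S)),
    Real.sqrt_nonneg (∑ S ∈ U, mu n p S), Real.sqrt_nonneg (∑ S ∈ D, mu n p S)]

lemma disj_sum_le_one {p : ℝ} (hp0 : 0 < p) (hp1 : p < 1)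
    (A B : Finset (Finset (Fin n))) (h : Disjoint A B) :
    (∑ S ∈ A, mu n p S) + (∑ S ∈ B, mu n p S) ≤ 1 := by
  classical
  rw [← Finset.sum_union h]
  calc ∑ S ∈ A ∪ B, mu n p S ≤ ∑ S : Finset (Fin n), mu n p S :=
        Finset.sum_le_sum_of_subset_of_nonneg (subset_univ _)
          (fun S _ _ => mu_nonneg hp0 hp1 S)
    _ = 1 := mu_total

theorem cross_sperner_measure (n : ℕ) (p : ℝ) (hp0 : 0 < p) (hp1 : p < 1)
    (F G : Finset (Finset (Fin n)))
    (hCS : ∀ A ∈ F, ∀ B ∈ G, ¬ A ⊆ B ∧ ¬ B ⊆ A) :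
    Real.sqrt (∑ A ∈ F, p ^ A.card * (1 - p) ^ (n - A.card)) +
      Real.sqrt (∑ B ∈ G, p ^ B.card * (1 - p) ^ (n - B.card)) ≤ 1 := by
  classical
  have hF := sqrt_bound hp0 hp1 F
  have hG := sqrt_bound hp0 hp1 G
  set UF := Finset.univ.filter (fun S : Finset (Fin n) => ∃ A ∈ F, A ⊆ S)
  set DF := Finset.univ.filter (fun S : Finset (Fin n) => ∃ A ∈ F, S ⊆ A)
  set UG := Finset.univ.filter (fun S : Finset (Fin n) => ∃ A ∈ G, A ⊆ S)
  set DG := Finset.univ.filter (fun S : Finset (Fin n) => ∃ A ∈ G, S ⊆ A)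
  have d1 : Disjoint UF DG := by
    rw [Finset.disjoint_left]
    intro S hS hS'
    simp only [UF, DG, mem_filter, mem_univ, true_and] at hS hS'
    obtain ⟨A, hA, hAS⟩ := hS
    obtain ⟨B, hB, hSB⟩ := hS'
    exact (hCS A hA B hB).1 (hAS.trans hSB)
  have d2 : Disjoint DF UG := by
    rw [Finset.disjoint_left]
    intro S hS hS'
    simp only [DF, UG, mem_filter, mem_univ, true_and] at hS hS'
    obtain ⟨A, hA, hSA⟩ := hS
    obtain ⟨B, hB, hBS⟩ := hS'
    exact (hCS A hA B hB).2 (hBS.trans hSA)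
  have e1 := disj_sum_le_one hp0 hp1 UF DG d1
  have e2 := disj_sum_le_one hp0 hp1 DF UG d2
  have eqF : (∑ A ∈ F, p ^ A.card * (1 - p) ^ (n - A.card)) = ∑ A ∈ F, mu n p A := rfl
  have eqG : (∑ B ∈ G, p ^ B.card * (1 - p) ^ (n - B.card)) = ∑ B ∈ G, mu n p B := rfl
  rw [eqF, eqG]
  linarith
end

section
/- Let $\mathcal{F}, \mathcal{G} \subseteq 2^{[n]}$ be cross-Sperner. Define $\mathcal{B}$ to be the family of sets $B \subseteq [n]$ containing some member of $\mathcal{F}$ but no member of $\mathcal{G}$, and $\mathcal{C}$ the family of sets containing some member of $\mathcal{G}$ but no member of $\mathcal{F}$. Then $\mu_p(\mathcal{B})^{1/2} + \mu_p(\mathcal{C})^{1/2} \leq 1$ for any $p \in (0,1)$. -/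
open Finset
open scoped FinsetFamily

theorem cross_sperner_BC (n : ℕ) (p : ℝ) (hp0 : 0 < p) (hp1 : p < 1)
    (F G : Finset (Finset (Fin n)))
    (hCS : ∀ A ∈ F, ∀ B ∈ G, ¬ A ⊆ B ∧ ¬ B ⊆ A) :
    Real.sqrt (∑ X ∈ Finset.univ.filter
        (fun X : Finset (Fin n) => (∃ A ∈ F, A ⊆ X) ∧ ¬ ∃ B ∈ G, B ⊆ X),
        p ^ X.card * (1 - p) ^ (n - X.card)) +
      Real.sqrt (∑ X ∈ Finset.univ.filter
        (fun X : Finset (Fin n) => (¬ ∃ A ∈ F, A ⊆ X) ∧ ∃ B ∈ G, B ⊆ X),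
        p ^ X.card * (1 - p) ^ (n - X.card)) ≤ 1 := by
  set μ : Finset (Fin n) → ℝ := fun X => p ^ X.card * (1 - p) ^ (n - X.card) with hμdef
  set S1 := Finset.univ.filter
      (fun X : Finset (Fin n) => (∃ A ∈ F, A ⊆ X) ∧ ¬ ∃ B ∈ G, B ⊆ X) with hS1
  set S2 := Finset.univ.filter
      (fun X : Finset (Fin n) => (¬ ∃ A ∈ F, A ⊆ X) ∧ ∃ B ∈ G, B ⊆ X) with hS2
  classical
  set S3 := Finset.univ.filter
      (fun X : Finset (Fin n) => (¬ ∃ A ∈ F, A ⊆ X) ∧ ¬ ∃ B ∈ G, B ⊆ X) with hS3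
  set S4 := Finset.univ.filter
      (fun X : Finset (Fin n) => (∃ A ∈ F, A ⊆ X) ∧ ∃ B ∈ G, B ⊆ X) with hS4
  have hp1' : (0:ℝ) ≤ 1 - p := by linarith
  have hμ0 : ∀ X, 0 ≤ μ X := fun X =>
    mul_nonneg (pow_nonneg hp0.le _) (pow_nonneg hp1' _)
  have hμ0' : (0 : Finset (Fin n) → ℝ) ≤ μ := hμ0
  -- total mass is 1
  have htotal : ∑ X : Finset (Fin n), μ X = 1 := by
    have h := Fintype.prod_add (fun _ : Fin n => p) (fun _ : Fin n => 1 - p)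
    simp only [prod_const, card_univ, Fintype.card_fin] at h
    calc ∑ X : Finset (Fin n), μ X
        = ∑ t : Finset (Fin n), p ^ t.card * (1 - p) ^ tᶜ.card := by
          refine Finset.sum_congr rfl fun t _ => ?_
          rw [hμdef]
          rw [card_compl, Fintype.card_fin]
      _ = (p + (1 - p)) ^ n := h.symm
      _ = 1 := by norm_num
  -- μ is modular
  have key : ∀ a b : Finset (Fin n), μ a * μ b = μ (a ⊓ b) * μ (a ⊔ b) := by
    intro a b
    have h1 := Finset.card_inter_add_card_union a b
    have h2 : (a ∪ b).card ≤ n := by simpa using Finset.card_le_univ (a ∪ b)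
    have h3 : a.card ≤ n := by simpa using Finset.card_le_univ a
    have h4 : b.card ≤ n := by simpa using Finset.card_le_univ b
    have h5 : (a ∩ b).card ≤ a.card := Finset.card_le_card Finset.inter_subset_left
    have e1 : a.card + b.card = (a ∩ b).card + (a ∪ b).card := h1.symm
    have e2 : (n - a.card) + (n - b.card) = (n - (a ∩ b).card) + (n - (a ∪ b).card) := by
      omega
    show μ a * μ b = μ (a ∩ b) * μ (a ∪ b)
    simp only [hμdef]
    calc p ^ a.card * (1 - p) ^ (n - a.card) * (p ^ b.card * (1 - p) ^ (n - b.card))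
        = p ^ (a.card + b.card) * (1 - p) ^ ((n - a.card) + (n - b.card)) := by
          rw [pow_add, pow_add]; ring
      _ = p ^ ((a ∩ b).card + (a ∪ b).card) *
            (1 - p) ^ ((n - (a ∩ b).card) + (n - (a ∪ b).card)) := by rw [e1, e2]
      _ = _ := by rw [pow_add, pow_add]; ring
  -- Ahlswede–Daykin
  have had : (∑ s ∈ S1, μ s) * ∑ s ∈ S2, μ s ≤ (∑ s ∈ S1 ⊼ S2, μ s) * ∑ s ∈ S1 ⊻ S2, μ s :=
    four_functions_theorem μ μ μ μ hμ0' hμ0' hμ0' hμ0'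
      (fun a b => le_of_eq (key a b)) S1 S2
  -- infs/sups land in S3/S4
  have hinfs : S1 ⊼ S2 ⊆ S3 := by
    intro X hX
    rw [Finset.mem_infs] at hX
    obtain ⟨a, ha, b, hb, rfl⟩ := hX
    rw [hS1, Finset.mem_filter] at ha
    rw [hS2, Finset.mem_filter] at hb
    rw [hS3, Finset.mem_filter]
    refine ⟨Finset.mem_univ _, ?_, ?_⟩
    · rintro ⟨A, hA, hsub⟩
      exact hb.2.1 ⟨A, hA, hsub.trans Finset.inter_subset_right⟩
    · rintro ⟨B, hB, hsub⟩
      exact ha.2.2 ⟨B, hB, hsub.trans Finset.inter_subset_left⟩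
  have hsups : S1 ⊻ S2 ⊆ S4 := by
    intro X hX
    rw [Finset.mem_sups] at hX
    obtain ⟨a, ha, b, hb, rfl⟩ := hX
    rw [hS1, Finset.mem_filter] at ha
    rw [hS2, Finset.mem_filter] at hb
    rw [hS4, Finset.mem_filter]
    obtain ⟨A, hA, hAa⟩ := ha.2.1
    obtain ⟨B, hB, hBb⟩ := hb.2.2
    exact ⟨Finset.mem_univ _, ⟨A, hA, hAa.trans Finset.subset_union_left⟩,
      ⟨B, hB, hBb.trans Finset.subset_union_right⟩⟩
  set b := ∑ s ∈ S1, μ s with hb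
  set c := ∑ s ∈ S2, μ s with hc
  set u := ∑ s ∈ S3, μ s with hudef
  set v := ∑ s ∈ S4, μ s with hvdef
  have hu : ∑ s ∈ S1 ⊼ S2, μ s ≤ u :=
    Finset.sum_le_sum_of_subset_of_nonneg hinfs fun i _ _ => hμ0 i
  have hv : ∑ s ∈ S1 ⊻ S2, μ s ≤ v :=
    Finset.sum_le_sum_of_subset_of_nonneg hsups fun i _ _ => hμ0 i
  have hb0 : 0 ≤ b := Finset.sum_nonneg fun i _ => hμ0 i
  have hc0 : 0 ≤ c := Finset.sum_nonneg fun i _ => hμ0 i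
  have hu0 : 0 ≤ u := Finset.sum_nonneg fun i _ => hμ0 i
  have hv0 : 0 ≤ v := Finset.sum_nonneg fun i _ => hμ0 i
  have hbc : b * c ≤ u * v :=
    had.trans (mul_le_mul hu hv (Finset.sum_nonneg fun i _ => hμ0 i) hu0)
  -- the four families are pairwise disjoint
  have d12 : Disjoint S1 S2 := by
    rw [Finset.disjoint_left]; intro a h1 h2
    rw [hS1, Finset.mem_filter] at h1; rw [hS2, Finset.mem_filter] at h2
    exact h2.2.1 h1.2.1
  have d13 : Disjoint S1 S3 := by
    rw [Finset.disjoint_left]; intro a h1 h2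
    rw [hS1, Finset.mem_filter] at h1; rw [hS3, Finset.mem_filter] at h2
    exact h2.2.1 h1.2.1
  have d23 : Disjoint S2 S3 := by
    rw [Finset.disjoint_left]; intro a h1 h2
    rw [hS2, Finset.mem_filter] at h1; rw [hS3, Finset.mem_filter] at h2
    exact h2.2.2 h1.2.2
  have d14 : Disjoint S1 S4 := by
    rw [Finset.disjoint_left]; intro a h1 h2
    rw [hS1, Finset.mem_filter] at h1; rw [hS4, Finset.mem_filter] at h2
    exact h1.2.2 h2.2.2
  have d24 : Disjoint S2 S4 := by
    rw [Finset.disjoint_left]; intro a h1 h2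
    rw [hS2, Finset.mem_filter] at h1; rw [hS4, Finset.mem_filter] at h2
    exact h1.2.1 h2.2.1
  have d34 : Disjoint S3 S4 := by
    rw [Finset.disjoint_left]; intro a h1 h2
    rw [hS3, Finset.mem_filter] at h1; rw [hS4, Finset.mem_filter] at h2
    exact h1.2.1 h2.2.1
  have hsum : b + c + u + v ≤ 1 := by
    have e : b + c + u + v = ∑ s ∈ ((S1 ∪ S2) ∪ S3) ∪ S4, μ s := by
      rw [Finset.sum_union (by simp [Finset.disjoint_union_left]; exact ⟨d14, d24, d34⟩),
        Finset.sum_union (by simp [Finset.disjoint_union_left]; exact ⟨d13, d23⟩),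
        Finset.sum_union d12]
    rw [e, ← htotal]
    exact Finset.sum_le_sum_of_subset_of_nonneg (Finset.subset_univ _) fun i _ _ => hμ0 i
  -- final arithmetic
  have h2 : (Real.sqrt b + Real.sqrt c) ^ 2 = b + c + 2 * Real.sqrt (b * c) := by
    rw [add_sq, Real.sq_sqrt hb0, Real.sq_sqrt hc0, Real.sqrt_mul hb0]
    ring
  have h3 : Real.sqrt (b * c) ≤ Real.sqrt (u * v) := Real.sqrt_le_sqrt hbc
  have h4 : 2 * Real.sqrt (u * v) ≤ u + v := by
    have ht := two_mul_le_add_sq (Real.sqrt u) (Real.sqrt v)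
    calc 2 * Real.sqrt (u * v) = 2 * Real.sqrt u * Real.sqrt v := by
          rw [Real.sqrt_mul hu0]; ring
      _ ≤ Real.sqrt u ^ 2 + Real.sqrt v ^ 2 := ht
      _ = u + v := by rw [Real.sq_sqrt hu0, Real.sq_sqrt hv0]
  have h5 : (Real.sqrt b + Real.sqrt c) ^ 2 ≤ 1 := by rw [h2]; linarith
  have h6 : 0 ≤ Real.sqrt b + Real.sqrt c :=
    add_nonneg (Real.sqrt_nonneg _) (Real.sqrt_nonneg _)
  exact (pow_le_one_iff_of_nonneg h6 two_ne_zero).1 h5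
end

section
/- Partition $2^{[n]}$ into four classes according to a pair of families $\mathcal{F}, \mathcal{G}$: $\mathcal{A}$ (sets containing a member of both $\mathcal{F}$ and $\mathcal{G}$), $\mathcal{B}$ (a member of $\mathcal{F}$ but none of $\mathcal{G}$), $\mathcal{C}$ (a member of $\mathcal{G}$ but none of $\mathcal{F}$), $\mathcal{D}$ (neither). Then $\mu_p(\mathcal{B}) \cdot \mu_p(\mathcal{C}) \leq \mu_p(\mathcal{A}) \cdot \mu_p(\mathcal{D})$ for any $p \in (0,1)$. -/
set_option maxHeartbeats 1000000

open Finset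

theorem four_classes_correlation (n : ℕ) (p : ℝ) (hp0 : 0 < p) (hp1 : p < 1)
    (F G : Finset (Finset (Fin n))) :
    (∑ X ∈ Finset.univ.filter
        (fun X : Finset (Fin n) => (∃ A ∈ F, A ⊆ X) ∧ ¬ ∃ B ∈ G, B ⊆ X),
        p ^ X.card * (1 - p) ^ (n - X.card)) *
      (∑ X ∈ Finset.univ.filter
        (fun X : Finset (Fin n) => (¬ ∃ A ∈ F, A ⊆ X) ∧ ∃ B ∈ G, B ⊆ X),
        p ^ X.card * (1 - p) ^ (n - X.card)) ≤
    (∑ X ∈ Finset.univ.filter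
        (fun X : Finset (Fin n) => (∃ A ∈ F, A ⊆ X) ∧ ∃ B ∈ G, B ⊆ X),
        p ^ X.card * (1 - p) ^ (n - X.card)) *
      (∑ X ∈ Finset.univ.filter
        (fun X : Finset (Fin n) => (¬ ∃ A ∈ F, A ⊆ X) ∧ ¬ ∃ B ∈ G, B ⊆ X),
        p ^ X.card * (1 - p) ^ (n - X.card)) := by
  classical
  set q : ℝ := 1 - p with hq
  have hq0 : (0:ℝ) ≤ q := by simp [hq]; linarith
  set μ : Finset (Fin n) → ℝ := fun X => p ^ X.card * q ^ (n - X.card) with hμdef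
  have hμ0 : 0 ≤ μ := fun X => mul_nonneg (pow_nonneg hp0.le _) (pow_nonneg hq0 _)
  set f : Finset (Fin n) → ℝ := fun X => if ∃ A ∈ F, A ⊆ X then 1 else 0 with hfdef
  set g : Finset (Fin n) → ℝ := fun X => if ∃ B ∈ G, B ⊆ X then 1 else 0 with hgdef
  have hf0 : 0 ≤ f := fun X => by dsimp [f]; split <;> norm_num
  have hg0 : 0 ≤ g := fun X => by dsimp [g]; split <;> norm_num
  have hfmono : Monotone f := by
    intro X Y hXY
    dsimp [f]
    split_ifs with h1 h2
    · exact le_rfl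
    · exact absurd (h1.imp fun A ⟨hA, hs⟩ => ⟨hA, hs.trans hXY⟩) h2
    · norm_num
    · exact le_rfl
  have hgmono : Monotone g := by
    intro X Y hXY
    dsimp [g]
    split_ifs with h1 h2
    · exact le_rfl
    · exact absurd (h1.imp fun A ⟨hA, hs⟩ => ⟨hA, hs.trans hXY⟩) h2
    · norm_num
    · exact le_rfl
  have hcard : ∀ X : Finset (Fin n), X.card ≤ n := fun X => by
    simpa using X.card_le_univ
  have hμmod : ∀ a b : Finset (Fin n), μ a * μ b ≤ μ (a ⊓ b) * μ (a ⊔ b) := by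
    intro a b
    have hab : (a ∩ b).card + (a ∪ b).card = a.card + b.card :=
      Finset.card_inter_add_card_union a b
    have : μ a * μ b = μ (a ⊓ b) * μ (a ⊔ b) := by
      dsimp [μ]
      rw [mul_mul_mul_comm, mul_mul_mul_comm (p ^ (a ∩ b).card), ← pow_add, ← pow_add,
        ← pow_add, ← pow_add]
      have h1 : a.card + b.card = (a ∩ b).card + (a ∪ b).card := hab.symm
      have h2 : (n - a.card) + (n - b.card) = (n - (a ∩ b).card) + (n - (a ∪ b).card) := by
        have := hcard a; have := hcard b; have := hcard (a ∩ b); have := hcard (a ∪ b)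
        omega
      rw [h1, h2]
    exact this.le
  have key := fkg f g μ hμ0 hf0 hg0 hfmono hgmono hμmod
  -- total mass is 1
  have hsum : (∑ X : Finset (Fin n), μ X) = 1 := by
    have h := Finset.prod_add (fun _ : Fin n => p) (fun _ : Fin n => q) Finset.univ
    simp only [Finset.prod_const, Finset.powerset_univ] at h
    have : ∀ X : Finset (Fin n), p ^ X.card * q ^ (Finset.univ \ X).card = μ X := by
      intro X
      dsimp [μ]
      congr 2
      rw [Finset.card_sdiff_of_subset (Finset.subset_univ X)]
      simp
    rw [Finset.sum_congr rfl fun X _ => (this X)] at h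
    have hpq : p + q = 1 := by simp [hq]
    rw [hpq] at h
    simpa using h.symm
  -- identify the sums
  have hμf : (∑ X : Finset (Fin n), μ X * f X) =
      ∑ X ∈ Finset.univ.filter (fun X : Finset (Fin n) => ∃ A ∈ F, A ⊆ X), μ X := by
    rw [Finset.sum_filter]
    exact Finset.sum_congr rfl fun X _ => by dsimp [f]; split <;> simp
  have hμg : (∑ X : Finset (Fin n), μ X * g X) =
      ∑ X ∈ Finset.univ.filter (fun X : Finset (Fin n) => ∃ B ∈ G, B ⊆ X), μ X := by
    rw [Finset.sum_filter]
    exact Finset.sum_congr rfl fun X _ => by dsimp [g]; split <;> simp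
  have hμfg : (∑ X : Finset (Fin n), μ X * (f X * g X)) =
      ∑ X ∈ Finset.univ.filter
        (fun X : Finset (Fin n) => (∃ A ∈ F, A ⊆ X) ∧ ∃ B ∈ G, B ⊆ X), μ X := by
    rw [Finset.sum_filter]
    refine Finset.sum_congr rfl fun X _ => ?_
    dsimp [f, g]
    by_cases h1 : ∃ A ∈ F, A ⊆ X <;> by_cases h2 : ∃ B ∈ G, B ⊆ X <;>
      simp [h1, h2]
  set a : ℝ := ∑ X ∈ Finset.univ.filter
      (fun X : Finset (Fin n) => (∃ A ∈ F, A ⊆ X) ∧ ∃ B ∈ G, B ⊆ X), μ X with ha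
  set b : ℝ := ∑ X ∈ Finset.univ.filter
      (fun X : Finset (Fin n) => (∃ A ∈ F, A ⊆ X) ∧ ¬ ∃ B ∈ G, B ⊆ X), μ X with hb
  set c : ℝ := ∑ X ∈ Finset.univ.filter
      (fun X : Finset (Fin n) => (¬ ∃ A ∈ F, A ⊆ X) ∧ ∃ B ∈ G, B ⊆ X), μ X with hc
  set d : ℝ := ∑ X ∈ Finset.univ.filter
      (fun X : Finset (Fin n) => (¬ ∃ A ∈ F, A ⊆ X) ∧ ¬ ∃ B ∈ G, B ⊆ X), μ X with hd
  have hsplitF : (∑ X ∈ Finset.univ.filter (fun X : Finset (Fin n) => ∃ A ∈ F, A ⊆ X), μ X)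
      = a + b := by
    rw [ha, hb, ← Finset.sum_filter_add_sum_filter_not
      (Finset.univ.filter (fun X : Finset (Fin n) => ∃ A ∈ F, A ⊆ X))
      (fun X => ∃ B ∈ G, B ⊆ X) μ]
    congr 1 <;> · rw [Finset.filter_filter]
  have hsplitG : (∑ X ∈ Finset.univ.filter (fun X : Finset (Fin n) => ∃ B ∈ G, B ⊆ X), μ X)
      = a + c := by
    rw [hc, ← Finset.sum_filter_add_sum_filter_not
      (Finset.univ.filter (fun X : Finset (Fin n) => ∃ B ∈ G, B ⊆ X))
      (fun X => ∃ A ∈ F, A ⊆ X) μ]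
    congr 1
    · rw [ha, Finset.filter_filter]
      refine Finset.sum_congr (Finset.filter_congr fun X _ => ?_) fun _ _ => rfl
      exact and_comm
    · rw [Finset.filter_filter]
      refine Finset.sum_congr (Finset.filter_congr fun X _ => ?_) fun _ _ => rfl
      exact and_comm
  have htotal : a + b + c + d = 1 := by
    have h1 := Finset.sum_filter_add_sum_filter_not Finset.univ
      (fun X : Finset (Fin n) => ∃ A ∈ F, A ⊆ X) μ
    have h2 : (∑ X ∈ Finset.univ.filter (fun X : Finset (Fin n) => ¬ ∃ A ∈ F, A ⊆ X), μ X)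
        = c + d := by
      rw [hc, hd, ← Finset.sum_filter_add_sum_filter_not
        (Finset.univ.filter (fun X : Finset (Fin n) => ¬ ∃ A ∈ F, A ⊆ X))
        (fun X => ∃ B ∈ G, B ⊆ X) μ]
      congr 1 <;> · rw [Finset.filter_filter]
    rw [hsplitF, h2, hsum] at h1
    linarith
  rw [hμf, hμg, hμfg, hsplitF, hsplitG, hsum] at key
  show b * c ≤ a * d
  have key2 : (a + b) * (a + c) ≤ a * (a + b + c + d) := by
    rw [htotal]; linarith [key]
  nlinarith [key2]
end

section
/- Let $\mathcal{G} \subseteq 2^{[n]}$ be an IU-family, and let $x \neq y \in [n]$. Then the families $\mathcal{A} = \mathcal{G}(x, \bar{y})$ and $\mathcal{B}^c = \{([n] \setminus \{x,y\}) \setminus B : B \in \mathcal{G}(y, \bar{x})\}$, both viewed as families of subsets of $[n] \setminus \{x,y\}$, are cross-Sperner. -/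
theorem IU_cross_sperner (n : ℕ) (G : Finset (Finset (Fin n)))
    (hI : ∀ F ∈ G, ∀ F' ∈ G, (F ∩ F').Nonempty)
    (hU : ∀ F ∈ G, ∀ F' ∈ G, F ∪ F' ≠ Finset.univ)
    (x y : Fin n) (hxy : x ≠ y) :
    ∀ A ∈ (G.filter (fun F => x ∈ F ∧ y ∉ F)).image (fun F => F.erase x),
      ∀ B ∈ (G.filter (fun F => y ∈ F ∧ x ∉ F)).image
          (fun F => ((Finset.univ.erase x).erase y) \ F),
        ¬ A ⊆ B ∧ ¬ B ⊆ A := by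
  intro A hA B hB
  simp only [Finset.mem_image, Finset.mem_filter] at hA hB
  obtain ⟨F, ⟨hFG, hxF, hyF⟩, rfl⟩ := hA
  obtain ⟨F', ⟨hF'G, hyF', hxF'⟩, rfl⟩ := hB
  constructor
  · intro h
    obtain ⟨z, hz⟩ := hI F hFG F' hF'G
    rw [Finset.mem_inter] at hz
    have hzx : z ≠ x := fun e => hxF' (e ▸ hz.2)
    have : z ∈ ((Finset.univ.erase x).erase y) \ F' :=
      h (Finset.mem_erase.mpr ⟨hzx, hz.1⟩)
    exact (Finset.mem_sdiff.mp this).2 hz.2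
  · intro h
    apply hU F hFG F' hF'G
    ext z
    simp only [Finset.mem_union, Finset.mem_univ, iff_true]
    by_cases hzx : z = x
    · exact Or.inl (hzx ▸ hxF)
    by_cases hzy : z = y
    · exact Or.inr (hzy ▸ hyF')
    by_cases hzF' : z ∈ F'
    · exact Or.inr hzF'
    · have : z ∈ ((Finset.univ.erase x).erase y) \ F' := by
        simp [hzx, hzy, hzF']
      exact Or.inl (Finset.mem_of_mem_erase (h this))
end

section
/- Let $\mathcal{G} \subseteq 2^{[n]}$ be an IU-family and $x \neq y \in [n]$. Then $|\mathcal{G}(x,\bar{y})| \cdot |\mathcal{G}(y,\bar{x})| \leq 2^{2(n-4)}$, and in particular $\min\{|\mathcal{G}(x,\bar{y})|, |\mathcal{G}(y,\bar{x})|\} \leq 2^{n-4}$. -/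
open Finset

private theorem crossSperner_int (a c d u i w N : ℤ)
    (ha0 : 0 ≤ a) (hc0 : 0 ≤ c) (hd0 : 0 ≤ d) (hu0 : 0 ≤ u) (hi0 : 0 ≤ i)
    (hN : 0 < N) (hai : a ≤ i) (hdN : d ≤ N) (huN : u ≤ N)
    (hHK : N * i ≤ u * d) (hcw : c + w ≤ N) (hwi : w + i = d + u) :
    16 * (a * c) ≤ N * N := by
  have he0 : (0:ℤ) ≤ N + i - d - u := by nlinarith
  have step1 : 16 * (a * c) * (N * N) ≤ 16 * ((N * i) * (N * (N + i - d - u))) := by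
    nlinarith [mul_le_mul hai (by linarith : c ≤ N + i - d - u) hc0 hi0,
      mul_pos hN hN]
  have step2 : N * (N + i - d - u) ≤ (N - d) * (N - u) := by nlinarith
  have step3 : (N * i) * (N * (N + i - d - u)) ≤ (d * u) * ((N - d) * (N - u)) := by
    apply mul_le_mul (by nlinarith) step2 (by nlinarith) (by nlinarith)
  have step4 : 16 * ((d * u) * ((N - d) * (N - u))) ≤ (N * N) * (N * N) := by
    have h1 : 4 * (d * (N - d)) ≤ N * N := by nlinarith [sq_nonneg (N - 2 * d)]
    have h2 : 4 * (u * (N - u)) ≤ N * N := by nlinarith [sq_nonneg (N - 2 * u)]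
    nlinarith [mul_le_mul h1 h2 (by nlinarith) (by nlinarith)]
  have : 16 * (a * c) * (N * N) ≤ (N * N) * (N * N) := by linarith
  exact le_of_mul_le_mul_right this (by positivity)

private theorem crossSperner {α : Type*} [Fintype α] [DecidableEq α]
    (A C : Finset (Finset α)) (hm : 2 ≤ Fintype.card α)
    (h : ∀ a ∈ A, ∀ c ∈ C, ¬ a ⊆ c ∧ ¬ c ⊆ a) :
    A.card * C.card ≤ 2 ^ (2 * (Fintype.card α - 2)) := by
  classical
  set m := Fintype.card α with hmdef
  set D := Finset.univ.filter (fun s : Finset α => ∃ a ∈ A, s ⊆ a) with hDdef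
  set U := Finset.univ.filter (fun s : Finset α => ∃ a ∈ A, a ⊆ s) with hUdef
  have hD : IsLowerSet (D : Set (Finset α)) := by
    intro s t hts hs
    simp only [hDdef, coe_filter, Set.mem_setOf_eq, mem_univ, true_and] at *
    obtain ⟨a, ha, hsa⟩ := hs
    exact ⟨a, ha, hts.trans hsa⟩
  have hUu : IsUpperSet (U : Set (Finset α)) := by
    intro s t hts hs
    simp only [hUdef, coe_filter, Set.mem_setOf_eq, mem_univ, true_and] at *
    obtain ⟨a, ha, hsa⟩ := hs
    exact ⟨a, ha, hsa.trans hts⟩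
  have hHK := hUu.card_inter_le_finset hD
  have hAsub : A ⊆ U ∩ D := by
    intro a ha
    simp only [mem_inter, hDdef, hUdef, mem_filter, mem_univ, true_and]
    exact ⟨⟨a, ha, subset_rfl⟩, ⟨a, ha, subset_rfl⟩⟩
  have hCdisj : Disjoint C (D ∪ U) := by
    rw [disjoint_left]
    intro c hc hcDU
    rcases mem_union.1 hcDU with hcD | hcU
    · simp only [hDdef, mem_filter, mem_univ, true_and] at hcD
      obtain ⟨a, ha, hca⟩ := hcD
      exact (h a ha c hc).2 hca
    · simp only [hUdef, mem_filter, mem_univ, true_and] at hcU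
      obtain ⟨a, ha, hac⟩ := hcU
      exact (h a ha c hc).1 hac
  have hcover : C.card + (D ∪ U).card ≤ 2 ^ m := by
    rw [← card_union_of_disjoint hCdisj]
    calc (C ∪ (D ∪ U)).card ≤ Fintype.card (Finset α) := card_le_univ _
      _ = 2 ^ m := Fintype.card_finset
  have hwi : (D ∪ U).card + (D ∩ U).card = D.card + U.card :=
    card_union_add_card_inter D U
  have hai : A.card ≤ (U ∩ D).card := card_le_card hAsub
  have hkey : 16 * (A.card * C.card) ≤ 2 ^ m * 2 ^ m := by
    have hN : (0:ℤ) < 2 ^ m := by positivity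
    have := crossSperner_int (A.card : ℤ) (C.card : ℤ) (D.card : ℤ) (U.card : ℤ)
      ((U ∩ D).card : ℤ) ((D ∪ U).card : ℤ) ((2 : ℤ) ^ m)
      (by positivity) (by positivity) (by positivity) (by positivity) (by positivity)
      hN (by exact_mod_cast hai)
      (by exact_mod_cast (Fintype.card_finset (α := α) ▸ card_le_univ D))
      (by exact_mod_cast (Fintype.card_finset (α := α) ▸ card_le_univ U))
      (by exact_mod_cast hHK) (by exact_mod_cast hcover)
      (by rw [inter_comm]; exact_mod_cast hwi)
    exact_mod_cast this
  have hpow : (2:ℕ) ^ m * 2 ^ m = 16 * 2 ^ (2 * (m - 2)) := by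
    have h : m + m = 4 + 2 * (m - 2) := by omega
    rw [← pow_add, h, pow_add]
    norm_num
  rw [hpow] at hkey
  exact Nat.le_of_mul_le_mul_left hkey (by norm_num)

theorem IU_product_bound (n : ℕ) (hn : 4 ≤ n) (G : Finset (Finset (Fin n)))
    (hI : ∀ F ∈ G, ∀ F' ∈ G, (F ∩ F').Nonempty)
    (hU : ∀ F ∈ G, ∀ F' ∈ G, F ∪ F' ≠ Finset.univ)
    (x y : Fin n) (hxy : x ≠ y) :
    ((G.filter (fun F => x ∈ F ∧ y ∉ F)).image (fun F => F.erase x)).card *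
        ((G.filter (fun F => y ∈ F ∧ x ∉ F)).image (fun F => F.erase y)).card ≤
      2 ^ (2 * (n - 4)) ∧
    min ((G.filter (fun F => x ∈ F ∧ y ∉ F)).image (fun F => F.erase x)).card
        ((G.filter (fun F => y ∈ F ∧ x ∉ F)).image (fun F => F.erase y)).card ≤
      2 ^ (n - 4) := by
  classical
  set A := (G.filter (fun F => x ∈ F ∧ y ∉ F)).image (fun F => F.erase x) with hAdef
  set B := (G.filter (fun F => y ∈ F ∧ x ∉ F)).image (fun F => F.erase y) with hBdef
  set p : Fin n → Prop := fun z => z ≠ x ∧ z ≠ y with hpdef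
  have hcard : Fintype.card {z : Fin n // p z} = n - 2 := by
    rw [Fintype.card_subtype]
    have : Finset.univ.filter p = Finset.univ \ {x, y} := by
      ext z
      simp [hpdef, not_or]
    rw [this, card_sdiff_of_subset (subset_univ _), card_univ, Fintype.card_fin,
      card_insert_of_notMem (by simp [hxy]), card_singleton]
  set E : Finset (Fin n) → Finset {z : Fin n // p z} := fun s => s.subtype p with hEdef
  -- key recovery fact
  have hrec : ∀ s : Finset (Fin n), x ∉ s → y ∉ s →
      (E s).map (Function.Embedding.subtype p) = s := by
    intro s hx hy
    rw [hEdef, subtype_map, filter_true_of_mem]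
    intro z hz
    exact ⟨fun h => hx (h ▸ hz), fun h => hy (h ▸ hz)⟩
  -- membership of A avoids x and y
  have hAavoid : ∀ a ∈ A, x ∉ a ∧ y ∉ a := by
    intro a ha
    rw [hAdef, mem_image] at ha
    obtain ⟨F, hF, rfl⟩ := ha
    rw [mem_filter] at hF
    exact ⟨notMem_erase _ _, fun h => hF.2.2 (mem_of_mem_erase h)⟩
  have hBavoid : ∀ b ∈ B, x ∉ b ∧ y ∉ b := by
    intro b hb
    rw [hBdef, mem_image] at hb
    obtain ⟨F, hF, rfl⟩ := hb
    rw [mem_filter] at hF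
    exact ⟨fun h => hF.2.2 (mem_of_mem_erase h), notMem_erase _ _⟩
  set A' := A.image E with hA'def
  set C := B.image (fun b => (E b)ᶜ) with hCdef
  have hcardA : A'.card = A.card := by
    apply card_image_of_injOn
    intro s hs t ht hst
    have := hrec s (hAavoid s hs).1 (hAavoid s hs).2
    rw [← this, hst, hrec t (hAavoid t ht).1 (hAavoid t ht).2]
  have hcardC : C.card = B.card := by
    apply card_image_of_injOn
    intro s hs t ht hst
    have hst' : E s = E t := compl_injective hst
    have := hrec s (hBavoid s hs).1 (hBavoid s hs).2
    rw [← this, hst', hrec t (hBavoid t ht).1 (hBavoid t ht).2]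
  have hcross : ∀ a ∈ A', ∀ c ∈ C, ¬ a ⊆ c ∧ ¬ c ⊆ a := by
    intro a ha c hc
    rw [hA'def, mem_image] at ha
    obtain ⟨a₀, ha₀, rfl⟩ := ha
    rw [hCdef, mem_image] at hc
    obtain ⟨b₀, hb₀, rfl⟩ := hc
    rw [hAdef, mem_image] at ha₀
    obtain ⟨F, hF, rfl⟩ := ha₀
    rw [mem_filter] at hF
    rw [hBdef, mem_image] at hb₀
    obtain ⟨F', hF', rfl⟩ := hb₀
    rw [mem_filter] at hF'
    constructor
    · intro hsub
      obtain ⟨z, hz⟩ := hI F hF.1 F' hF'.1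
      rw [mem_inter] at hz
      have hzx : z ≠ x := fun h => hF'.2.2 (h ▸ hz.2)
      have hzy : z ≠ y := fun h => hF.2.2 (h ▸ hz.1)
      have h1 : (⟨z, hzx, hzy⟩ : {z : Fin n // p z}) ∈ E (F.erase x) := by
        rw [hEdef, mem_subtype]; exact mem_erase.2 ⟨hzx, hz.1⟩
      have h2 : (⟨z, hzx, hzy⟩ : {z : Fin n // p z}) ∈ E (F'.erase y) := by
        rw [hEdef, mem_subtype]; exact mem_erase.2 ⟨hzy, hz.2⟩
      exact (mem_compl.1 (hsub h1)) h2
    · intro hsub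
      have : ∃ z : Fin n, z ∉ F ∪ F' := by
        by_contra hcon
        push_neg at hcon
        exact hU F hF.1 F' hF'.1 (eq_univ_iff_forall.2 hcon)
      obtain ⟨z, hz⟩ := this
      rw [mem_union, not_or] at hz
      have hzx : z ≠ x := fun h => hz.1 (h ▸ hF.2.1)
      have hzy : z ≠ y := fun h => hz.2 (h ▸ hF'.2.1)
      have h2 : (⟨z, hzx, hzy⟩ : {z : Fin n // p z}) ∈ (E (F'.erase y))ᶜ := by
        rw [mem_compl, hEdef, mem_subtype]
        exact fun h => hz.2 (mem_of_mem_erase h)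
      have h1 := hsub h2
      rw [hEdef, mem_subtype] at h1
      exact hz.1 (mem_of_mem_erase h1)
  have hm2 : 2 ≤ Fintype.card {z : Fin n // p z} := by omega
  have := crossSperner A' C hm2 hcross
  rw [hcardA, hcardC, hcard] at this
  have heq : 2 * (n - 2 - 2) = 2 * (n - 4) := by omega
  rw [heq] at this
  refine ⟨this, ?_⟩
  by_contra hcon
  push_neg at hcon
  have h1 : 2 ^ (n - 4) < A.card := lt_of_lt_of_le hcon (min_le_left _ _)
  have h2 : 2 ^ (n - 4) < B.card := lt_of_lt_of_le hcon (min_le_right _ _)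
  have : 2 ^ (2 * (n - 4)) < A.card * B.card := by
    calc 2 ^ (2 * (n - 4)) = 2 ^ (n - 4) * 2 ^ (n - 4) := by rw [two_mul, pow_add]
      _ < A.card * B.card := Nat.mul_lt_mul'' h1 h2
  omega
end

section
/- Let $\mathcal{F}, \mathcal{G} \subseteq 2^{[k]}$ be cross $t$-intersecting families whose maximal necessary intersection point is $a$, and let $1 \leq i < j \leq k$. Then $s_{i,j}(\mathcal{F})$ and $s_{i,j}(\mathcal{G})$ are cross $t$-intersecting, and their maximal necessary intersection point is at most $a$. -/
/-- The shifting operator `s_{i,j}` applied to a family of finite sets. -/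
def shiftFam (i j : ℕ) (F : Finset (Finset ℕ)) : Finset (Finset ℕ) :=
  F.image (fun A => if j ∈ A ∧ i ∉ A ∧ insert i (A.erase j) ∉ F then insert i (A.erase j) else A)

/-- `b` is a necessary intersection point of the cross `t`-intersecting pair `F, G`. -/
def NIP (t : ℕ) (F G : Finset (Finset ℕ)) (b : ℕ) : Prop :=
  ∃ A ∈ F, ∃ B ∈ G, (Finset.Icc 1 b ∩ A ∩ B).card = t ∧ b ∈ A ∧ b ∈ B

lemma claim_key (i j : ℕ) (hij : i ≠ j) (F G : Finset (Finset ℕ)) (A' B' : Finset ℕ)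
    (hA' : A' ∈ shiftFam i j F) (hB' : B' ∈ shiftFam i j G) :
    ∃ A0 ∈ F, ∃ B0 ∈ G,
      (A' ∩ B').erase i ⊆ A0 ∩ B0 ∧ A0 ∩ B0 ⊆ (A' ∩ B') ∪ {j} ∧
      (j ∈ A0 ∩ B0 → j ∈ A' ∩ B' ∨ (i ∈ A' ∩ B' ∧ i ∉ A0 ∩ B0)) := by
  simp only [shiftFam, Finset.mem_image] at hA' hB'
  obtain ⟨A, hA, hA'eq⟩ := hA'
  obtain ⟨B, hB, hB'eq⟩ := hB'
  by_cases cA : j ∈ A ∧ i ∉ A ∧ insert i (A.erase j) ∉ F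
  · rw [if_pos cA] at hA'eq
    obtain ⟨hjA, hiA, -⟩ := cA
    by_cases cB : j ∈ B ∧ i ∉ B ∧ insert i (B.erase j) ∉ G
    · rw [if_pos cB] at hB'eq
      obtain ⟨hjB, hiB, -⟩ := cB
      subst hA'eq; subst hB'eq
      refine ⟨A, hA, B, hB, ?_, ?_, ?_⟩
      · intro x hx
        simp only [Finset.mem_erase, Finset.mem_inter, Finset.mem_insert] at *
        tauto
      · intro x hx
        simp only [Finset.mem_union, Finset.mem_singleton, Finset.mem_inter,
          Finset.mem_insert, Finset.mem_erase] at *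
        by_cases hxj : x = j <;> tauto
      · intro hjAB
        simp only [Finset.mem_inter, Finset.mem_insert, Finset.mem_erase] at *
        tauto
    · rw [if_neg cB] at hB'eq
      by_cases hjB : j ∈ B ∧ i ∉ B
      · have hC : insert i (B.erase j) ∈ G := by tauto
        subst hA'eq; subst hB'eq
        refine ⟨A, hA, insert i (B.erase j), hC, ?_, ?_, ?_⟩
        · intro x hx
          simp only [Finset.mem_erase, Finset.mem_inter, Finset.mem_insert] at *
          tauto
        · intro x hx
          simp only [Finset.mem_union, Finset.mem_singleton, Finset.mem_inter,
            Finset.mem_insert, Finset.mem_erase] at *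
          by_cases hxi : x = i
          · subst hxi; tauto
          · tauto
        · intro hjAB
          simp only [Finset.mem_inter, Finset.mem_insert, Finset.mem_erase] at *
          tauto
      · subst hA'eq; subst hB'eq
        refine ⟨A, hA, B, hB, ?_, ?_, ?_⟩
        · intro x hx
          simp only [Finset.mem_erase, Finset.mem_inter, Finset.mem_insert] at *
          tauto
        · intro x hx
          simp only [Finset.mem_union, Finset.mem_singleton, Finset.mem_inter,
            Finset.mem_insert, Finset.mem_erase] at *
          by_cases hxj : x = j <;> tauto
        · intro hjAB
          simp only [Finset.mem_inter, Finset.mem_insert, Finset.mem_erase] at *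
          tauto
  · rw [if_neg cA] at hA'eq
    by_cases cB : j ∈ B ∧ i ∉ B ∧ insert i (B.erase j) ∉ G
    · rw [if_pos cB] at hB'eq
      obtain ⟨hjB, hiB, -⟩ := cB
      by_cases hjA : j ∈ A ∧ i ∉ A
      · have hC : insert i (A.erase j) ∈ F := by tauto
        subst hA'eq; subst hB'eq
        refine ⟨insert i (A.erase j), hC, B, hB, ?_, ?_, ?_⟩
        · intro x hx
          simp only [Finset.mem_erase, Finset.mem_inter, Finset.mem_insert] at *
          tauto
        · intro x hx
          simp only [Finset.mem_union, Finset.mem_singleton, Finset.mem_inter,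
            Finset.mem_insert, Finset.mem_erase] at *
          by_cases hxi : x = i
          · subst hxi; tauto
          · tauto
        · intro hjAB
          simp only [Finset.mem_inter, Finset.mem_insert, Finset.mem_erase] at *
          tauto
      · subst hA'eq; subst hB'eq
        refine ⟨A, hA, B, hB, ?_, ?_, ?_⟩
        · intro x hx
          simp only [Finset.mem_erase, Finset.mem_inter, Finset.mem_insert] at *
          tauto
        · intro x hx
          simp only [Finset.mem_union, Finset.mem_singleton, Finset.mem_inter,
            Finset.mem_insert, Finset.mem_erase] at *
          by_cases hxj : x = j <;> tauto
        · intro hjAB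
          simp only [Finset.mem_inter, Finset.mem_insert, Finset.mem_erase] at *
          tauto
    · rw [if_neg cB] at hB'eq
      subst hA'eq; subst hB'eq
      exact ⟨A, hA, B, hB, Finset.erase_subset _ _, Finset.subset_union_left, fun h => Or.inl h⟩

lemma card_le_of (i j : ℕ) (hij : i ≠ j) (X Y : Finset ℕ)
    (h2 : Y ⊆ X ∪ {j}) (h3 : j ∈ Y → j ∈ X ∨ (i ∈ X ∧ i ∉ Y)) :
    Y.card ≤ X.card := by
  by_cases hjY : j ∈ Y ∧ j ∉ X
  · obtain ⟨hiX, hiY⟩ := (h3 hjY.1).resolve_left hjY.2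
    have hsub : Y ⊆ insert j (X.erase i) := by
      intro x hx
      have := h2 hx
      simp only [Finset.mem_union, Finset.mem_singleton, Finset.mem_insert,
        Finset.mem_erase] at *
      rcases this with h | h
      · right; exact ⟨fun hxi => hiY (hxi ▸ hx), h⟩
      · left; exact h
    calc Y.card ≤ (insert j (X.erase i)).card := Finset.card_le_card hsub
      _ ≤ (X.erase i).card + 1 := Finset.card_insert_le _ _
      _ = X.card - 1 + 1 := by rw [Finset.card_erase_of_mem hiX]
      _ = X.card := by
          have : 1 ≤ X.card := Finset.card_pos.mpr ⟨i, hiX⟩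
          omega
  · have hYX : Y ⊆ X := by
      intro x hx
      rcases Finset.mem_union.mp (h2 hx) with h | h
      · exact h
      · have hxj : x = j := Finset.mem_singleton.mp h
        subst hxj
        tauto
    exact Finset.card_le_card hYX

lemma count_bound (t b i j : ℕ) (hi : 1 ≤ i) (hij : i < j) (hb : 1 ≤ b) (X Y : Finset ℕ)
    (hX : (Finset.Icc 1 b ∩ X).card = t) (hbX : b ∈ X)
    (h1 : X.erase i ⊆ Y) (h2 : Y ⊆ X ∪ {j})
    (h3 : j ∈ Y → j ∈ X ∨ (i ∈ X ∧ i ∉ Y)) :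
    (Finset.Icc 1 b ∩ Y).card < t ∨ ((Finset.Icc 1 b ∩ Y).card = t ∧ b ∈ Y) := by
  set S := Finset.Icc 1 b with hS
  have hbSX : b ∈ S ∩ X := by
    simp only [hS, Finset.mem_inter, Finset.mem_Icc]
    exact ⟨⟨hb, le_refl b⟩, hbX⟩
  have ht1 : 1 ≤ t := by
    rw [← hX]; exact Finset.card_pos.mpr ⟨b, hbSX⟩
  by_cases hjY : j ∈ Y ∧ j ∉ X
  · obtain ⟨hiX, hiY⟩ := (h3 hjY.1).resolve_left hjY.2
    by_cases hjb : j ≤ b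
    · have hbi : b ≠ i := by omega
      have hbY : b ∈ Y := h1 (Finset.mem_erase.mpr ⟨hbi, hbX⟩)
      have hiSX : i ∈ S ∩ X := by
        simp only [hS, Finset.mem_inter, Finset.mem_Icc]
        exact ⟨⟨hi, by omega⟩, hiX⟩
      have hsub : S ∩ Y ⊆ insert j ((S ∩ X).erase i) := by
        intro x hx
        obtain ⟨hxS, hxY⟩ := Finset.mem_inter.mp hx
        rcases Finset.mem_union.mp (h2 hxY) with h | h
        · refine Finset.mem_insert_of_mem (Finset.mem_erase.mpr ⟨?_, Finset.mem_inter.mpr ⟨hxS, h⟩⟩)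
          intro hxi; exact hiY (hxi ▸ hxY)
        · exact Finset.mem_insert.mpr (Or.inl (Finset.mem_singleton.mp h))
      have hcard : (S ∩ Y).card ≤ t := by
        calc (S ∩ Y).card ≤ (insert j ((S ∩ X).erase i)).card := Finset.card_le_card hsub
          _ ≤ ((S ∩ X).erase i).card + 1 := Finset.card_insert_le _ _
          _ = (S ∩ X).card - 1 + 1 := by rw [Finset.card_erase_of_mem hiSX]
          _ = t := by rw [hX]; omega
      rcases lt_or_eq_of_le hcard with h | h
      · exact Or.inl h
      · exact Or.inr ⟨h, hbY⟩
    · have hsub : S ∩ Y ⊆ (S ∩ X).erase i := by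
        intro x hx
        obtain ⟨hxS, hxY⟩ := Finset.mem_inter.mp hx
        have hxb : x ≤ b := (Finset.mem_Icc.mp hxS).2
        rcases Finset.mem_union.mp (h2 hxY) with h | h
        · refine Finset.mem_erase.mpr ⟨fun hxi => hiY (hxi ▸ hxY), Finset.mem_inter.mpr ⟨hxS, h⟩⟩
        · exfalso; have := Finset.mem_singleton.mp h; omega
      by_cases hbi : b = i
      · left
        have hsub2 : S ∩ Y ⊆ (S ∩ X).erase b := by rw [hbi]; exact hsub
        calc (S ∩ Y).card ≤ ((S ∩ X).erase b).card := Finset.card_le_card hsub2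
          _ = (S ∩ X).card - 1 := Finset.card_erase_of_mem hbSX
          _ < t := by rw [hX]; omega
      · have hbY : b ∈ Y := h1 (Finset.mem_erase.mpr ⟨hbi, hbX⟩)
        have hcard : (S ∩ Y).card ≤ t := by
          calc (S ∩ Y).card ≤ ((S ∩ X).erase i).card := Finset.card_le_card hsub
            _ ≤ (S ∩ X).card := Finset.card_erase_le
            _ = t := hX
        rcases lt_or_eq_of_le hcard with h | h
        · exact Or.inl h
        · exact Or.inr ⟨h, hbY⟩
  · have hYX : Y ⊆ X := by
      intro x hx
      rcases Finset.mem_union.mp (h2 hx) with h | h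
      · exact h
      · have hxj : x = j := Finset.mem_singleton.mp h
        subst hxj; tauto
    by_cases hbY : b ∈ Y
    · have hcard : (S ∩ Y).card ≤ t := by
        rw [← hX]
        exact Finset.card_le_card (Finset.inter_subset_inter_left hYX)
      rcases lt_or_eq_of_le hcard with h | h
      · exact Or.inl h
      · exact Or.inr ⟨h, hbY⟩
    · have hbi : b = i := by
        by_contra hne
        exact hbY (h1 (Finset.mem_erase.mpr ⟨hne, hbX⟩))
      left
      have hsub : S ∩ Y ⊆ (S ∩ X).erase b := by
        intro x hx
        obtain ⟨hxS, hxY⟩ := Finset.mem_inter.mp hx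
        exact Finset.mem_erase.mpr ⟨fun h => hbY (h ▸ hxY), Finset.mem_inter.mpr ⟨hxS, hYX hxY⟩⟩
      calc (S ∩ Y).card ≤ ((S ∩ X).erase b).card := Finset.card_le_card hsub
        _ = (S ∩ X).card - 1 := Finset.card_erase_of_mem hbSX
        _ < t := by rw [hX]; omega

lemma exists_nip_ge (k t b : ℕ) (A B : Finset ℕ)
    (hA : A ⊆ Finset.Icc 1 k) (ht : t ≤ (A ∩ B).card)
    (hlt : (Finset.Icc 1 b ∩ (A ∩ B)).card < t) :
    ∃ c, b < c ∧ (Finset.Icc 1 c ∩ (A ∩ B)).card = t ∧ c ∈ A ∧ c ∈ B := by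
  set f : ℕ → ℕ := fun c => (Finset.Icc 1 c ∩ (A ∩ B)).card with hf
  have hmono : Monotone f := by
    intro c d hcd
    apply Finset.card_le_card
    intro x hx
    simp only [Finset.mem_inter, Finset.mem_Icc] at *
    exact ⟨⟨hx.1.1, hx.1.2.trans hcd⟩, hx.2⟩
  have hk : t ≤ f k := by
    have heq : Finset.Icc 1 k ∩ (A ∩ B) = A ∩ B := by
      apply Finset.inter_eq_right.mpr
      intro x hx
      exact hA (Finset.mem_inter.mp hx).1
    simp only [hf, heq]
    exact ht
  have hex : ∃ c, t ≤ f c := ⟨k, hk⟩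
  have hc : t ≤ f (Nat.find hex) := Nat.find_spec hex
  have hbc : b < Nat.find hex := by
    by_contra h
    push_neg at h
    exact absurd (le_trans hc (hmono h)) (not_le.mpr hlt)
  obtain ⟨d, hd⟩ : ∃ d, Nat.find hex = d + 1 := ⟨Nat.find hex - 1, by omega⟩
  have hc1 : ¬ t ≤ f d := Nat.find_min hex (by omega)
  have hstep : Finset.Icc 1 (d + 1) = insert (d + 1) (Finset.Icc 1 d) := by
    ext x
    simp only [Finset.mem_Icc, Finset.mem_insert]
    omega
  by_cases hm : d + 1 ∈ A ∩ B
  · have heq : Finset.Icc 1 (d + 1) ∩ (A ∩ B) = insert (d + 1) (Finset.Icc 1 d ∩ (A ∩ B)) := by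
      rw [hstep, Finset.insert_inter_of_mem hm]
    have hnotmem : d + 1 ∉ Finset.Icc 1 d ∩ (A ∩ B) := by
      simp only [Finset.mem_inter, Finset.mem_Icc]
      omega
    have hcard : f (d + 1) = f d + 1 := by
      simp only [hf, heq, Finset.card_insert_of_notMem hnotmem]
    have hft : f (d + 1) = t := by
      rw [hd] at hc
      omega
    obtain ⟨hmA, hmB⟩ := Finset.mem_inter.mp hm
    exact ⟨d + 1, by omega, hft, hmA, hmB⟩
  · exfalso
    have heq : Finset.Icc 1 (d + 1) ∩ (A ∩ B) = Finset.Icc 1 d ∩ (A ∩ B) := by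
      rw [hstep, Finset.insert_inter_of_notMem hm]
    rw [hd] at hc
    simp only [hf, heq] at hc
    exact hc1 hc

theorem shift_preserves_max_nip (k t i j a : ℕ)
    (hi : 1 ≤ i) (hij : i < j) (hj : j ≤ k)
    (F G : Finset (Finset ℕ))
    (hF : ∀ A ∈ F, A ⊆ Finset.Icc 1 k) (hG : ∀ B ∈ G, B ⊆ Finset.Icc 1 k)
    (hcross : ∀ A ∈ F, ∀ B ∈ G, t ≤ (A ∩ B).card)
    (ha : NIP t F G a) (hmax : ∀ b, NIP t F G b → b ≤ a) :
    (∀ A ∈ shiftFam i j F, ∀ B ∈ shiftFam i j G, t ≤ (A ∩ B).card) ∧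
      (∀ b, NIP t (shiftFam i j F) (shiftFam i j G) b → b ≤ a) := by
  constructor
  · intro A' hA' B' hB'
    obtain ⟨A0, hA0, B0, hB0, h1, h2, h3⟩ :=
      claim_key i j (by omega) F G A' B' hA' hB'
    exact le_trans (hcross A0 hA0 B0 hB0) (card_le_of i j (by omega) _ _ h2 h3)
  · intro b hb
    obtain ⟨A', hA', B', hB', hcard, hbA, hbB⟩ := hb
    obtain ⟨A0, hA0, B0, hB0, h1, h2, h3⟩ :=
      claim_key i j (by omega) F G A' B' hA' hB'
    have hb1 : 1 ≤ b := by
      simp only [shiftFam, Finset.mem_image] at hA'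
      obtain ⟨A, hA, hAe⟩ := hA'
      split_ifs at hAe
      · subst hAe
        rcases Finset.mem_insert.mp hbA with h | h
        · omega
        · have := hF A hA (Finset.mem_of_mem_erase h)
          exact (Finset.mem_Icc.mp this).1
      · subst hAe
        exact (Finset.mem_Icc.mp (hF A hA hbA)).1
    have hX : (Finset.Icc 1 b ∩ (A' ∩ B')).card = t := by
      rw [← Finset.inter_assoc]; exact hcard
    have hbX : b ∈ A' ∩ B' := Finset.mem_inter.mpr ⟨hbA, hbB⟩
    rcases count_bound t b i j hi hij hb1 _ _ hX hbX h1 h2 h3 with h | ⟨h, hbY⟩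
    · obtain ⟨c, hbc, hc, hcA, hcB⟩ :=
        exists_nip_ge k t b A0 B0 (hF _ hA0) (hcross _ hA0 _ hB0) h
      have hnip : NIP t F G c :=
        ⟨A0, hA0, B0, hB0, by rw [Finset.inter_assoc]; exact hc, hcA, hcB⟩
      exact le_trans (le_of_lt hbc) (hmax c hnip)
    · obtain ⟨hbA0, hbB0⟩ := Finset.mem_inter.mp hbY
      exact hmax b ⟨A0, hA0, B0, hB0, by rw [Finset.inter_assoc]; exact h, hbA0, hbB0⟩
end

section
/- Let $\mathcal{F}, \mathcal{G} \subseteq 2^{[k]}$ be cross $t$-intersecting, and suppose $a$ is the maximal necessary intersection point of $\mathcal{F}$ and $\mathcal{G}$. Then for every $F \in \mathcal{F}$ and $G \in \mathcal{G}$, $|[a-1] \cap F \cap G| \geq t - 1$. -/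
theorem max_nip_lower_bound (k t a : ℕ)
    (F G : Finset (Finset ℕ))
    (hF : ∀ A ∈ F, A ⊆ Finset.Icc 1 k) (hG : ∀ B ∈ G, B ⊆ Finset.Icc 1 k)
    (hcross : ∀ A ∈ F, ∀ B ∈ G, t ≤ (A ∩ B).card)
    (ha : NIP t F G a) (hmax : ∀ b, NIP t F G b → b ≤ a) :
    ∀ A ∈ F, ∀ B ∈ G, t - 1 ≤ (Finset.Icc 1 (a - 1) ∩ A ∩ B).card := by
  intro A hA B hB
  rcases Nat.eq_zero_or_pos t with ht | ht
  · simp [ht]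
  set S := A ∩ B with hS
  have key : ∀ b, (Finset.Icc 1 b ∩ A ∩ B) = Finset.Icc 1 b ∩ S := by
    intro b; rw [Finset.inter_assoc]
  have hsub : S ⊆ Finset.Icc 1 k := fun x hx => hF A hA (Finset.mem_inter.1 hx).1
  have hk : t ≤ (Finset.Icc 1 k ∩ S).card := by
    rw [Finset.inter_eq_right.2 hsub]; exact hcross A hA B hB
  have hex : ∃ b, t ≤ (Finset.Icc 1 b ∩ S).card := ⟨k, hk⟩
  set b := Nat.find hex with hbdef
  have hb : t ≤ (Finset.Icc 1 b ∩ S).card := Nat.find_spec hex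
  have hbpos : 0 < b := by
    by_contra h
    have h0 : b = 0 := by omega
    rw [h0] at hb; simp at hb; omega
  have hprev : (Finset.Icc 1 (b - 1) ∩ S).card < t := by
    have := Nat.find_min hex (show b - 1 < b by omega)
    omega
  have hins : Finset.Icc 1 b = insert b (Finset.Icc 1 (b - 1)) := by
    ext x; simp only [Finset.mem_Icc, Finset.mem_insert]; omega
  have hstep : (Finset.Icc 1 b ∩ S).card ≤ (Finset.Icc 1 (b - 1) ∩ S).card + 1 := by
    have hsub2 : Finset.Icc 1 b ∩ S ⊆ insert b (Finset.Icc 1 (b - 1) ∩ S) := by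
      rw [hins]
      intro x hx
      rcases Finset.mem_inter.1 hx with ⟨hx1, hx2⟩
      rcases Finset.mem_insert.1 hx1 with h | h
      · exact Finset.mem_insert.2 (Or.inl h)
      · exact Finset.mem_insert.2 (Or.inr (Finset.mem_inter.2 ⟨h, hx2⟩))
    calc (Finset.Icc 1 b ∩ S).card ≤ (insert b (Finset.Icc 1 (b - 1) ∩ S)).card :=
          Finset.card_le_card hsub2
      _ ≤ (Finset.Icc 1 (b - 1) ∩ S).card + 1 := Finset.card_insert_le _ _
  have hcardb : (Finset.Icc 1 b ∩ S).card = t := le_antisymm (by omega) hb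
  have hbS : b ∈ S := by
    by_contra hbS
    have heq : Finset.Icc 1 b ∩ S = Finset.Icc 1 (b - 1) ∩ S := by
      ext x
      simp only [Finset.mem_inter, Finset.mem_Icc]
      constructor
      · rintro ⟨⟨h1, h2⟩, h3⟩
        refine ⟨⟨h1, ?_⟩, h3⟩
        rcases eq_or_lt_of_le h2 with h | h
        · exact absurd (h ▸ h3) hbS
        · omega
      · rintro ⟨⟨h1, h2⟩, h3⟩; exact ⟨⟨h1, by omega⟩, h3⟩
    rw [heq] at hcardb; omega
  have hNIP : NIP t F G b :=
    ⟨A, hA, B, hB, by rw [key]; exact hcardb, (Finset.mem_inter.1 hbS).1,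
      (Finset.mem_inter.1 hbS).2⟩
  have hba : b ≤ a := hmax b hNIP
  rw [key]
  by_cases hcase : b = a
  · subst hcase
    have hnot : b ∉ Finset.Icc 1 (b - 1) ∩ S := by
      intro h
      have := (Finset.mem_inter.1 h).1
      rw [Finset.mem_Icc] at this; omega
    have heq2 : Finset.Icc 1 b ∩ S = insert b (Finset.Icc 1 (b - 1) ∩ S) := by
      ext x
      simp only [Finset.mem_inter, Finset.mem_Icc, Finset.mem_insert]
      constructor
      · rintro ⟨⟨h1, h2⟩, h3⟩
        rcases eq_or_lt_of_le h2 with h | h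
        · exact Or.inl h
        · exact Or.inr ⟨⟨h1, by omega⟩, h3⟩
      · rintro (rfl | ⟨⟨h1, h2⟩, h3⟩)
        · exact ⟨⟨by omega, le_rfl⟩, hbS⟩
        · exact ⟨⟨h1, by omega⟩, h3⟩
    rw [heq2, Finset.card_insert_of_notMem hnot] at hcardb
    omega
  · have hb' : b ≤ a - 1 := by omega
    have hsub3 : Finset.Icc 1 b ∩ S ⊆ Finset.Icc 1 (a - 1) ∩ S :=
      Finset.inter_subset_inter (Finset.Icc_subset_Icc_right hb') (Finset.Subset.refl _)
    have := Finset.card_le_card hsub3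
    omega
end

section
/- Let $k \geq \ell \geq \ell' \geq t \geq 1$ and let $\omega_1, \omega_2 : \{0,1,\ldots,k\} \to \mathbb{R}_{\geq 0}$ be non-increasing. Let $\mathcal{F} \subseteq \binom{[k]}{\leq \ell}$, $\mathcal{G} \subseteq \binom{[k]}{\leq \ell'}$ be non-empty cross $t$-intersecting with maximal necessary intersection point $a \geq t+1$, such that $\mathcal{F} \setminus \mathcal{F}^a$ and $\mathcal{G} \setminus \mathcal{G}^a$ are both non-empty. Then there exist non-empty cross $t$-intersecting families $\mathcal{F}^* \subseteq \binom{[k]}{\leq \ell}$, $\mathcal{G}^* \subseteq \binom{[k]}{\leq \ell'}$ with $\omega_1(\mathcal{F}^*) + \omega_2(\mathcal{G}^*) \geq \omega_1(\mathcal{F}) + \omega_2(\mathcal{G})$ whose maximal necessary intersection point is strictly smaller than $a$. -/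
/-!
Write `U = [1, a)`, `F₀ = F \ Fᵃ` and `G₀ = G \ Gᵃ`. Since every necessary intersection point is
at most `a`, any `A ∈ F` and `B ∈ G` share `t` points of `[1, a]`, and even `t` points of `U`
unless `A ∈ Fᵃ` and `B ∈ Gᵃ`. Two candidate pairs are cross `t`-intersecting already on `U`, so
all their necessary intersection points lie below `a`: the sets whose trace on `U` contains that
of a member of `F₀`, paired with the sets meeting every member of `F₀` in `t` points of `U`; and
the same pair built from `G₀`, with the two sides exchanged. Every `A ∈ F` outside the first
family of the first pair contains `a`, and `A ↦ A \ {a}` maps these sets injectively into the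
first family of the second pair, outside `F`, without losing weight as `ω₁` is non-increasing.
As `F` itself lies in that family, the two families on the `F` side weigh at least `2 ω₁(F)`,
and likewise on the `G` side; so one of the two pairs weighs at least `ω₁(F) + ω₂(G)`.
-/

open Finset

lemma exists_mem_card_filter_le_eq {α : Type*} [LinearOrder α] {t : ℕ} (ht : 1 ≤ t)
    {S : Finset α} (htS : t ≤ #S) : ∃ b ∈ S, #{x ∈ S | x ≤ b} = t := by
  classical
  induction S using Finset.induction_on_max with
  | empty => rw [card_empty] at htS; omega
  | insert m s hlt ih =>
    have hm : m ∉ s := fun h => lt_irrefl m (hlt m h)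
    rcases le_or_gt t #s with hts | hts
    · obtain ⟨b, hb, hcard⟩ := ih hts
      refine ⟨b, mem_insert_of_mem hb, ?_⟩
      rwa [filter_insert, if_neg (not_le.2 (hlt b hb))]
    · refine ⟨m, mem_insert_self m s, ?_⟩
      rw [filter_true_of_mem fun x hx => ?_]
      · rw [card_insert_of_notMem hm] at htS ⊢
        omega
      · rcases mem_insert.1 hx with rfl | hx
        exacts [le_rfl, (hlt x hx).le]

lemma Icc_one_inter_eq_filter {S : Finset ℕ} (h0 : 0 ∉ S) (b : ℕ) :
    Icc 1 b ∩ S = {x ∈ S | x ≤ b} := by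
  ext x
  simp only [mem_inter, mem_Icc, mem_filter]
  have : x ∈ S → x ≠ 0 := fun hx h => h0 (h ▸ hx)
  grind

lemma le_card_Ico_inter_of_not_tight {α : Type*} [PartialOrder α] [LocallyFiniteOrder α]
    [DecidableEq α] {lo a : α} {S : Finset α} {t : ℕ} (h : t ≤ #(Icc lo a ∩ S))
    (htight : ¬(#(Icc lo a ∩ S) = t ∧ a ∈ S)) : t ≤ #(Ico lo a ∩ S) := by
  have hsub : Icc lo a ∩ S ⊆ insert a (Ico lo a ∩ S) := by
    intro x hx
    simp only [mem_inter, mem_Icc, mem_insert, mem_Ico] at hx ⊢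
    rcases eq_or_ne x a with rfl | hxa
    exacts [Or.inl rfl, Or.inr ⟨⟨hx.1.1, lt_of_le_of_ne hx.1.2 hxa⟩, hx.2⟩]
  by_cases ha : a ∈ S
  · have := (card_le_card hsub).trans (card_insert_le _ _)
    have : #(Icc lo a ∩ S) ≠ t := fun h => htight ⟨h, ha⟩
    omega
  · exact h.trans <| card_le_card <|
      (subset_insert_iff_of_notMem fun h => ha (mem_inter.1 h).2).1 hsub

def CrossIntersectingOn (t : ℕ) (U : Finset ℕ) (F G : Finset (Finset ℕ)) : Prop :=
  ∀ A ∈ F, ∀ B ∈ G, t ≤ #(U ∩ (A ∩ B))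

section NecessaryIntersectionPoints

variable {t a : ℕ} {F G : Finset (Finset ℕ)}

lemma le_card_Icc_inter_of_forall_NIP_le (ht : 1 ≤ t) (hmax : ∀ b, NIP t F G b → b ≤ a)
    {A B : Finset ℕ} (hA : A ∈ F) (hB : B ∈ G) (h0 : 0 ∉ A) (hAB : t ≤ #(A ∩ B)) :
    t ≤ #(Icc 1 a ∩ A ∩ B) := by
  obtain ⟨b, hb, hcard⟩ := exists_mem_card_filter_le_eq ht hAB
  have hb_card : #(Icc 1 b ∩ A ∩ B) = t := by
    rw [inter_assoc, Icc_one_inter_eq_filter fun h => h0 (mem_inter.1 h).1, hcard]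
  have hba : b ≤ a := hmax b ⟨A, hA, B, hB, hb_card, (mem_inter.1 hb).1, (mem_inter.1 hb).2⟩
  calc t = #(Icc 1 b ∩ A ∩ B) := hb_card.symm
    _ ≤ #(Icc 1 a ∩ A ∩ B) := card_le_card <| by gcongr

lemma le_card_Ico_inter_of_forall_NIP_le (ht : 1 ≤ t) (hmax : ∀ b, NIP t F G b → b ≤ a)
    {A B : Finset ℕ} (hA : A ∈ F) (hB : B ∈ G) (h0 : 0 ∉ A) (hAB : t ≤ #(A ∩ B))
    (htight : ¬(#(Icc 1 a ∩ A ∩ B) = t ∧ a ∈ A ∧ a ∈ B)) :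
    t ≤ #(Ico 1 a ∩ (A ∩ B)) := by
  refine le_card_Ico_inter_of_not_tight ?_ ?_
  · simpa only [inter_assoc] using le_card_Icc_inter_of_forall_NIP_le ht hmax hA hB h0 hAB
  · simpa only [inter_assoc, mem_inter] using htight

lemma crossIntersectingOn_Ico_of_forall_NIP_le (ht : 1 ≤ t) (hF0 : ∀ A ∈ F, 0 ∉ A)
    (hcross : ∀ A ∈ F, ∀ B ∈ G, t ≤ #(A ∩ B)) (hmax : ∀ b, NIP t F G b → b ≤ a)
    {F' G' : Finset (Finset ℕ)} (hF' : F' ⊆ F) (hG' : G' ⊆ G)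
    (htight : ∀ A ∈ F', ∀ B ∈ G', ¬(#(Icc 1 a ∩ A ∩ B) = t ∧ a ∈ A ∧ a ∈ B)) :
    CrossIntersectingOn t (Ico 1 a) F' G' := fun A hA B hB =>
  le_card_Ico_inter_of_forall_NIP_le ht hmax (hF' hA) (hG' hB) (hF0 A (hF' hA))
    (hcross A (hF' hA) B (hG' hB)) (htight A hA B hB)

end NecessaryIntersectionPoints

namespace CrossIntersectingOn

variable {t : ℕ} {U : Finset ℕ} {F G : Finset (Finset ℕ)}

lemma symm (h : CrossIntersectingOn t U F G) : CrossIntersectingOn t U G F :=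
  fun B hB A hA => inter_comm A B ▸ h A hA B hB

lemma le_card_inter (h : CrossIntersectingOn t U F G) :
    ∀ A ∈ F, ∀ B ∈ G, t ≤ #(A ∩ B) :=
  fun A hA B hB => (h A hA B hB).trans (card_le_card inter_subset_right)

lemma NIP_lt {a : ℕ} (ht : 1 ≤ t) (h : CrossIntersectingOn t (Ico 1 a) F G) {b : ℕ}
    (hb : NIP t F G b) : b < a := by
  obtain ⟨A, hA, B, hB, hcard, hbA, hbB⟩ := hb
  by_contra! hab
  have hb1 : 1 ≤ b := by
    by_contra! hb0
    rw [Icc_eq_empty (by omega), empty_inter, empty_inter, card_empty] at hcard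
    omega
  have hsub : insert b (Ico 1 a ∩ (A ∩ B)) ⊆ Icc 1 b ∩ A ∩ B := by
    intro x hx
    simp only [mem_insert, mem_inter, mem_Ico, mem_Icc] at hx ⊢
    rcases hx with rfl | ⟨⟨h1, h2⟩, hxA, hxB⟩
    exacts [⟨⟨⟨hb1, le_rfl⟩, hbA⟩, hbB⟩, ⟨⟨⟨h1, by omega⟩, hxA⟩, hxB⟩]
  have hnotmem : b ∉ Ico 1 a ∩ (A ∩ B) := fun hb' => by
    simp only [mem_inter, mem_Ico] at hb'
    omega
  have := card_le_card hsub
  rw [card_insert_of_notMem hnotmem] at this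
  have := h A hA B hB
  omega

end CrossIntersectingOn

section Candidates

variable (k l t : ℕ) (U : Finset ℕ) (C : Finset (Finset ℕ))

def traceUpset : Finset (Finset ℕ) :=
  {X ∈ (Icc 1 k).powerset | #X ≤ l ∧ ∃ A ∈ C, A ∩ U ⊆ X}

def partnerFamily : Finset (Finset ℕ) :=
  {X ∈ (Icc 1 k).powerset | #X ≤ l ∧ ∀ A ∈ C, t ≤ #(U ∩ (A ∩ X))}

variable {k l t U C}

lemma mem_traceUpset {X : Finset ℕ} :
    X ∈ traceUpset k l U C ↔ (X ⊆ Icc 1 k ∧ #X ≤ l) ∧ ∃ A ∈ C, A ∩ U ⊆ X := by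
  simp [traceUpset, and_assoc]

lemma mem_partnerFamily {X : Finset ℕ} :
    X ∈ partnerFamily k l t U C ↔
      (X ⊆ Icc 1 k ∧ #X ≤ l) ∧ ∀ A ∈ C, t ≤ #(U ∩ (A ∩ X)) := by
  simp [partnerFamily, and_assoc]

lemma crossIntersectingOn_traceUpset_partnerFamily (l' : ℕ) :
    CrossIntersectingOn t U (traceUpset k l U C) (partnerFamily k l' t U C) := by
  intro X hX D hD
  obtain ⟨-, A, hA, hAX⟩ := mem_traceUpset.1 hX
  refine ((mem_partnerFamily.1 hD).2 A hA).trans (card_le_card fun x hx => ?_)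
  simp only [mem_inter] at hx ⊢
  exact ⟨hx.1, hAX (mem_inter.2 ⟨hx.2.1, hx.1⟩), hx.2.2⟩

lemma subset_traceUpset (hC : ∀ A ∈ C, A ⊆ Icc 1 k ∧ #A ≤ l) : C ⊆ traceUpset k l U C :=
  fun A hA => mem_traceUpset.2 ⟨hC A hA, A, hA, inter_subset_left⟩

lemma subset_partnerFamily {G : Finset (Finset ℕ)} (hG : ∀ B ∈ G, B ⊆ Icc 1 k ∧ #B ≤ l)
    (hCG : CrossIntersectingOn t U C G) : G ⊆ partnerFamily k l t U C :=
  fun B hB => mem_partnerFamily.2 ⟨hG B hB, fun A hA => hCG A hA B hB⟩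

end Candidates

lemma sum_add_sum_le_of_injOn {ι M : Type*} [DecidableEq ι] [AddCommMonoid M] [PartialOrder M]
    [IsOrderedAddMonoid M] {f : ι → M} {g : ι → ι} {s r u : Finset ι} (hsu : s ⊆ u)
    (hg : ∀ i ∈ r, g i ∈ u \ s) (hinj : Set.InjOn g r) (hle : ∀ i ∈ r, f i ≤ f (g i))
    (hf : ∀ i ∈ u, 0 ≤ f i) :
    ∑ i ∈ s, f i + ∑ i ∈ r, f i ≤ ∑ i ∈ u, f i := by
  have hdisj : Disjoint s (r.image g) := by
    rw [disjoint_right]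
    rintro _ hj
    obtain ⟨i, hi, rfl⟩ := mem_image.1 hj
    exact (mem_sdiff.1 (hg i hi)).2
  have hsub : s ∪ r.image g ⊆ u := by
    refine union_subset hsu fun _ hj => ?_
    obtain ⟨i, hi, rfl⟩ := mem_image.1 hj
    exact (mem_sdiff.1 (hg i hi)).1
  calc ∑ i ∈ s, f i + ∑ i ∈ r, f i ≤ ∑ i ∈ s, f i + ∑ i ∈ r, f (g i) := by
        gcongr with i hi; exact hle i hi
    _ = ∑ i ∈ s ∪ r.image g, f i := by rw [sum_union hdisj, sum_image hinj]
    _ ≤ ∑ i ∈ u, f i := sum_le_sum_of_subset_of_nonneg hsub fun i hi _ => hf i hi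

lemma two_mul_sum_le_sum_traceUpset_add_sum_partnerFamily {k l t a : ℕ} {U : Finset ℕ}
    {w : ℕ → ℝ} {F Fa G₀ : Finset (Finset ℕ)} (hF : ∀ A ∈ F, A ⊆ Icc 1 k ∧ #A ≤ l)
    (hw : ∀ i, 0 ≤ w i) (hmono : ∀ i j, i ≤ j → j ≤ k → w j ≤ w i) (haU : a ∉ U)
    (haFa : ∀ A ∈ Fa, a ∈ A) (hG₀F : CrossIntersectingOn t U G₀ F) :
    2 * ∑ A ∈ F, w #A ≤
      ∑ X ∈ traceUpset k l U (F \ Fa), w #X + ∑ X ∈ partnerFamily k l t U G₀, w #X := by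
  set T := traceUpset k l U (F \ Fa)
  have haA : ∀ A ∈ F \ T, a ∈ A := fun A hA => by
    obtain ⟨hAF, hAT⟩ := mem_sdiff.1 hA
    by_contra haA
    exact hAT (subset_traceUpset (fun A hA => hF A (mem_sdiff.1 hA).1)
      (mem_sdiff.2 ⟨hAF, fun hAa => haA (haFa A hAa)⟩))
  have herase : ∀ A ∈ F \ T, A.erase a ∈ partnerFamily k l t U G₀ \ F := by
    intro A hA
    obtain ⟨hAF, hAT⟩ := mem_sdiff.1 hA
    have hpartner : A.erase a ∈ partnerFamily k l t U G₀ := by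
      refine mem_partnerFamily.2 ⟨⟨(erase_subset a A).trans (hF A hAF).1,
        card_erase_le.trans (hF A hAF).2⟩, fun D hD => ?_⟩
      rw [inter_erase, inter_erase, erase_eq_of_notMem fun h => haU (mem_inter.1 h).1]
      exact hG₀F D hD A hAF
    refine mem_sdiff.2 ⟨hpartner, fun hEF => hAT ?_⟩
    have hE : A.erase a ∈ F \ Fa := mem_sdiff.2 ⟨hEF, fun h => notMem_erase a A (haFa _ h)⟩
    exact mem_traceUpset.2 ⟨hF A hAF, A.erase a, hE, inter_subset_left.trans (erase_subset a A)⟩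
  have hlow : ∑ A ∈ F, w #A ≤ ∑ X ∈ T, w #X + ∑ A ∈ F \ T, w #A := by
    rw [← sum_inter_add_sum_sdiff F T]
    gcongr
    exacts [fun i _ _ => hw _, inter_subset_right]
  have hhigh : ∑ A ∈ F, w #A + ∑ A ∈ F \ T, w #A ≤ ∑ X ∈ partnerFamily k l t U G₀, w #X :=
    sum_add_sum_le_of_injOn (subset_partnerFamily hF hG₀F) herase
      ((erase_injOn' a).mono fun A hA => haA A hA)
      (fun A hA => by
        have hAk : #A ≤ k :=
          (card_le_card (hF A (mem_sdiff.1 hA).1).1).trans (Nat.card_Icc 1 k).le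
        rw [card_erase_of_mem (haA A hA)]
        exact hmono _ _ (Nat.sub_le _ _) hAk)
      fun _ _ => hw _
  linarith

theorem reduction_step_general (k l l' t a : ℕ)
    (ht : 1 ≤ t)
    (w1 w2 : ℕ → ℝ)
    (hw1pos : ∀ i, 0 ≤ w1 i) (hw2pos : ∀ i, 0 ≤ w2 i)
    (hw1mono : ∀ i j, i ≤ j → j ≤ k → w1 j ≤ w1 i)
    (hw2mono : ∀ i j, i ≤ j → j ≤ k → w2 j ≤ w2 i)
    (F G : Finset (Finset ℕ))
    (hF : ∀ A ∈ F, A ⊆ Finset.Icc 1 k ∧ A.card ≤ l)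
    (hG : ∀ B ∈ G, B ⊆ Finset.Icc 1 k ∧ B.card ≤ l')
    (hcross : ∀ A ∈ F, ∀ B ∈ G, t ≤ (A ∩ B).card)
    (hmax : ∀ b, NIP t F G b → b ≤ a)
    (hFa : (F \ F.filter (fun A =>
      ∃ B ∈ G, (Finset.Icc 1 a ∩ A ∩ B).card = t ∧ a ∈ A ∧ a ∈ B)).Nonempty)
    (hGa : (G \ G.filter (fun B =>
      ∃ A ∈ F, (Finset.Icc 1 a ∩ A ∩ B).card = t ∧ a ∈ A ∧ a ∈ B)).Nonempty) :
    ∃ F' G' : Finset (Finset ℕ),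
      (∀ A ∈ F', A ⊆ Finset.Icc 1 k ∧ A.card ≤ l) ∧
      (∀ B ∈ G', B ⊆ Finset.Icc 1 k ∧ B.card ≤ l') ∧
      F'.Nonempty ∧ G'.Nonempty ∧
      (∀ A ∈ F', ∀ B ∈ G', t ≤ (A ∩ B).card) ∧
      (∑ A ∈ F, w1 A.card) + (∑ B ∈ G, w2 B.card) ≤
        (∑ A ∈ F', w1 A.card) + (∑ B ∈ G', w2 B.card) ∧
      (∀ b, NIP t F' G' b → b < a) := by
  set Fa := F.filter fun A => ∃ B ∈ G, #(Icc 1 a ∩ A ∩ B) = t ∧ a ∈ A ∧ a ∈ B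
  set Ga := G.filter fun B => ∃ A ∈ F, #(Icc 1 a ∩ A ∩ B) = t ∧ a ∈ A ∧ a ∈ B
  have hF0 : ∀ A ∈ F, 0 ∉ A := fun A hA h => by simpa using (hF A hA).1 h
  have hF₀G : CrossIntersectingOn t (Ico 1 a) (F \ Fa) G :=
    crossIntersectingOn_Ico_of_forall_NIP_le ht hF0 hcross hmax sdiff_subset subset_rfl
      fun A hA B hB htight => (mem_sdiff.1 hA).2 (mem_filter.2 ⟨(mem_sdiff.1 hA).1, B, hB, htight⟩)
  have hFG₀ : CrossIntersectingOn t (Ico 1 a) F (G \ Ga) :=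
    crossIntersectingOn_Ico_of_forall_NIP_le ht hF0 hcross hmax subset_rfl sdiff_subset
      fun A hA B hB htight => (mem_sdiff.1 hB).2 (mem_filter.2 ⟨(mem_sdiff.1 hB).1, A, hA, htight⟩)
  have hwF := two_mul_sum_le_sum_traceUpset_add_sum_partnerFamily (Fa := Fa) hF hw1pos hw1mono
    right_notMem_Ico (fun _ hA => by obtain ⟨-, _, -, -, h, -⟩ := mem_filter.1 hA; exact h)
    hFG₀.symm
  have hwG := two_mul_sum_le_sum_traceUpset_add_sum_partnerFamily (Fa := Ga) hG hw2pos hw2mono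
    right_notMem_Ico (fun _ hB => by obtain ⟨-, _, -, -, -, h⟩ := mem_filter.1 hB; exact h)
    hF₀G
  by_cases hP : (∑ A ∈ F, w1 #A) + ∑ B ∈ G, w2 #B ≤ ∑ X ∈ traceUpset k l (Ico 1 a) (F \ Fa), w1 #X
      + ∑ X ∈ partnerFamily k l' t (Ico 1 a) (F \ Fa), w2 #X
  · have hPU : CrossIntersectingOn t (Ico 1 a) (traceUpset k l (Ico 1 a) (F \ Fa))
        (partnerFamily k l' t (Ico 1 a) (F \ Fa)) := crossIntersectingOn_traceUpset_partnerFamily l'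
    exact ⟨_, _, fun X hX => (mem_traceUpset.1 hX).1, fun X hX => (mem_partnerFamily.1 hX).1,
      hFa.mono (subset_traceUpset fun A hA => hF A (sdiff_subset hA)),
      (hGa.mono sdiff_subset).mono (subset_partnerFamily hG hF₀G), hPU.le_card_inter, hP,
      fun b => hPU.NIP_lt ht⟩
  · have hQU : CrossIntersectingOn t (Ico 1 a) (partnerFamily k l t (Ico 1 a) (G \ Ga))
        (traceUpset k l' (Ico 1 a) (G \ Ga)) :=
      (crossIntersectingOn_traceUpset_partnerFamily l).symm
    exact ⟨_, _, fun X hX => (mem_partnerFamily.1 hX).1, fun X hX => (mem_traceUpset.1 hX).1,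
      (hFa.mono sdiff_subset).mono (subset_partnerFamily hF hFG₀.symm),
      hGa.mono (subset_traceUpset fun B hB => hG B (sdiff_subset hB)), hQU.le_card_inter,
      by linarith, fun b => hQU.NIP_lt ht⟩

theorem reduction_step (k l l' t a : ℕ)
    (hkl : l ≤ k) (hll : l' ≤ l) (htl : t ≤ l') (ht : 1 ≤ t)
    (w1 w2 : ℕ → ℝ)
    (hw1pos : ∀ i, 0 ≤ w1 i) (hw2pos : ∀ i, 0 ≤ w2 i)
    (hw1mono : ∀ i j, i ≤ j → j ≤ k → w1 j ≤ w1 i)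
    (hw2mono : ∀ i j, i ≤ j → j ≤ k → w2 j ≤ w2 i)
    (F G : Finset (Finset ℕ))
    (hF : ∀ A ∈ F, A ⊆ Finset.Icc 1 k ∧ A.card ≤ l)
    (hG : ∀ B ∈ G, B ⊆ Finset.Icc 1 k ∧ B.card ≤ l')
    (hFne : F.Nonempty) (hGne : G.Nonempty)
    (hcross : ∀ A ∈ F, ∀ B ∈ G, t ≤ (A ∩ B).card)
    (ha : NIP t F G a) (hmax : ∀ b, NIP t F G b → b ≤ a)
    (hat : t + 1 ≤ a)
    (hFa : (F \ F.filter (fun A =>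
      ∃ B ∈ G, (Finset.Icc 1 a ∩ A ∩ B).card = t ∧ a ∈ A ∧ a ∈ B)).Nonempty)
    (hGa : (G \ G.filter (fun B =>
      ∃ A ∈ F, (Finset.Icc 1 a ∩ A ∩ B).card = t ∧ a ∈ A ∧ a ∈ B)).Nonempty) :
    ∃ F' G' : Finset (Finset ℕ),
      (∀ A ∈ F', A ⊆ Finset.Icc 1 k ∧ A.card ≤ l) ∧
      (∀ B ∈ G', B ⊆ Finset.Icc 1 k ∧ B.card ≤ l') ∧
      F'.Nonempty ∧ G'.Nonempty ∧
      (∀ A ∈ F', ∀ B ∈ G', t ≤ (A ∩ B).card) ∧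
      (∑ A ∈ F, w1 A.card) + (∑ B ∈ G, w2 B.card) ≤
        (∑ A ∈ F', w1 A.card) + (∑ B ∈ G', w2 B.card) ∧
      (∀ b, NIP t F' G' b → b < a) :=
  reduction_step_general k l l' t a ht w1 w2 hw1pos hw2pos hw1mono hw2mono F G hF hG hcross hmax hFa
    hGa
end

section
/- Let $[m] = \bigcup_{i \in [k]} X_i$ with the $X_i$ pairwise disjoint of size $n$, each with minimum element $v_i$. Suppose $\mathcal{F} \subseteq \mathcal{H}(n,k,\ell)$ and $\mathcal{G} \subseteq \mathcal{H}(n,k,\ell')$ are shifted cross $t$-intersecting separated families. Then $\mathcal{A}(\mathcal{F})$ and $\mathcal{A}(\mathcal{G})$ are cross $t$-intersecting families of subsets of $[k]$ of sizes at most $\ell$ and $\ell'$ respectively. -/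
open Classical

/-- The `i`-th block `X_i` of size `n`: `X_i = ((i-1)n, i n]`. -/
def Xblock (n i : ℕ) : Finset ℕ := Finset.Ioc ((i - 1) * n) (i * n)

/-- The minimum element `v_i` of block `X_i`. -/
def vmin (n i : ℕ) : ℕ := (i - 1) * n + 1

/-- The separated families `H(n, k, l)`. -/
noncomputable def Hfam (n k l : ℕ) : Finset (Finset ℕ) :=
  (Finset.Icc 1 (n * k)).powerset.filter
    (fun S => S.card = l ∧ ∀ i ∈ Finset.Icc 1 k, (S ∩ Xblock n i).card ≤ 1)

/-- `A(H)` : indices of blocks in which `H` consists exactly of the minimal element. -/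
def Aset (n k : ℕ) (H : Finset ℕ) : Finset ℕ :=
  (Finset.Icc 1 k).filter (fun i => H ∩ Xblock n i = {vmin n i})

/-!
Fix `A ∈ F`. If `B ∈ G` and `x ∈ A ∩ B` lies in the block `X_i` but is not its minimum `v_i`,
then `B' = B - x + v_i` is in `G` because `G` is shifted, `A ∩ B'` has one element fewer
than `A ∩ B`, and `A(A) ∩ A(B') ⊆ A(A) ∩ A(B)` because `i ∉ A(A)`. Iterating, we reach
`B* ∈ G` all of whose common elements with `A` are block minima `v_i` with
`i ∈ A(A) ∩ A(B*)`, so `t ≤ |A ∩ B*| ≤ |A(A) ∩ A(B*)| ≤ |A(A) ∩ A(B)|`.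
-/

open Finset

section Blocks

variable {n i j x : ℕ}

lemma mem_Xblock : x ∈ Xblock n i ↔ (i - 1) * n < x ∧ x ≤ i * n := mem_Ioc

lemma vmin_mem_Xblock (hx : x ∈ Xblock n i) : vmin n i ∈ Xblock n i := by
  rw [mem_Xblock] at hx ⊢
  unfold vmin
  omega

lemma vmin_le_of_mem_Xblock (hx : x ∈ Xblock n i) : vmin n i ≤ x := by
  rw [mem_Xblock] at hx
  unfold vmin
  omega

lemma eq_of_mem_Xblock_of_mem_Xblock (hi : x ∈ Xblock n i) (hj : x ∈ Xblock n j) : i = j := by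
  rw [mem_Xblock] at hi hj
  have key : ∀ {a b : ℕ}, a < b → a * n ≤ (b - 1) * n := fun h =>
    Nat.mul_le_mul_right n (by omega)
  rcases lt_trichotomy i j with h | h | h
  · have := key h; omega
  · exact h
  · have := key h; omega

lemma exists_mem_Xblock {k : ℕ} (hx : x ∈ Icc 1 (n * k)) : ∃ i ∈ Icc 1 k, x ∈ Xblock n i := by
  rw [mem_Icc] at hx
  have hn : 0 < n := Nat.pos_of_mul_pos_right (by omega : 0 < n * k)
  have hq : (x - 1) / n < k := Nat.div_lt_of_lt_mul (by omega)
  refine ⟨(x - 1) / n + 1, mem_Icc.2 ⟨Nat.le_add_left 1 _, hq⟩, ?_⟩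
  rw [mem_Xblock, Nat.add_sub_cancel, Nat.add_one_mul]
  have := Nat.div_add_mod' (x - 1) n
  have := Nat.mod_lt (x - 1) hn
  omega

lemma insert_erase_inter_Xblock {B : Finset ℕ} {a b : ℕ}
    (ha : a ∈ Xblock n i) (hb : b ∈ Xblock n i) (hji : j ≠ i) :
    insert a (B.erase b) ∩ Xblock n j = B ∩ Xblock n j := by
  ext y
  simp only [mem_inter, mem_insert, mem_erase]
  constructor
  · rintro ⟨rfl | ⟨-, hyB⟩, hy⟩
    · exact absurd (eq_of_mem_Xblock_of_mem_Xblock hy ha) hji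
    · exact ⟨hyB, hy⟩
  · rintro ⟨hyB, hy⟩
    refine ⟨Or.inr ⟨?_, hyB⟩, hy⟩
    rintro rfl
    exact hji (eq_of_mem_Xblock_of_mem_Xblock hy hb)

end Blocks

def IsSeparated (n k : ℕ) (S : Finset ℕ) : Prop := ∀ i ∈ Icc 1 k, (S ∩ Xblock n i).card ≤ 1

def IsBlockShifted (n k : ℕ) (G : Finset (Finset ℕ)) : Prop :=
  ∀ i j, i < j → (∃ b ∈ Icc 1 k, i ∈ Xblock n b ∧ j ∈ Xblock n b) → shiftFam i j G = G

lemma mem_Hfam {n k l : ℕ} {S : Finset ℕ} :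
    S ∈ Hfam n k l ↔ S ⊆ Icc 1 (n * k) ∧ S.card = l ∧ IsSeparated n k S := by
  simp [Hfam, IsSeparated]

lemma mem_Aset {n k i : ℕ} {H : Finset ℕ} :
    i ∈ Aset n k H ↔ i ∈ Icc 1 k ∧ H ∩ Xblock n i = {vmin n i} := by
  simp [Aset]

lemma vmin_mem_of_mem_Aset {n k i : ℕ} {H : Finset ℕ} (hi : i ∈ Aset n k H) :
    vmin n i ∈ H ∩ Xblock n i := by
  rw [(mem_Aset.1 hi).2]
  exact mem_singleton_self _

lemma card_Aset_le (n k : ℕ) (H : Finset ℕ) : (Aset n k H).card ≤ H.card := by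
  refine card_le_card_of_injOn (vmin n) (fun i hi => (mem_inter.1 (vmin_mem_of_mem_Aset hi)).1) ?_
  intro i hi j hj hij
  exact eq_of_mem_Xblock_of_mem_Xblock (mem_inter.1 (vmin_mem_of_mem_Aset hi)).2
    (hij ▸ (mem_inter.1 (vmin_mem_of_mem_Aset hj)).2)

lemma mem_of_shiftFam_eq {i j : ℕ} {F : Finset (Finset ℕ)} {A : Finset ℕ}
    (hF : shiftFam i j F = F) (hA : A ∈ F) (hj : j ∈ A) (hi : i ∉ A) :
    insert i (A.erase j) ∈ F := by
  by_contra h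
  have := mem_image_of_mem
    (fun A => if j ∈ A ∧ i ∉ A ∧ insert i (A.erase j) ∉ F then insert i (A.erase j) else A) hA
  rw [if_pos ⟨hj, hi, h⟩] at this
  exact h (hF ▸ this)

namespace IsSeparated

variable {n k i x : ℕ} {S : Finset ℕ}

lemma inter_Xblock_eq_singleton (hS : IsSeparated n k S) (hi : i ∈ Icc 1 k) (hxS : x ∈ S)
    (hx : x ∈ Xblock n i) : S ∩ Xblock n i = {x} :=
  eq_singleton_iff_unique_mem.2
    ⟨mem_inter.2 ⟨hxS, hx⟩, fun y hy => card_le_one.1 (hS i hi) y hy x (mem_inter.2 ⟨hxS, hx⟩)⟩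

lemma vmin_notMem (hS : IsSeparated n k S) (hi : i ∈ Icc 1 k) (hxS : x ∈ S)
    (hx : x ∈ Xblock n i) (hxv : x ≠ vmin n i) : vmin n i ∉ S := fun hv => by
  have := hS.inter_Xblock_eq_singleton hi hxS hx ▸ mem_inter.2 ⟨hv, vmin_mem_Xblock hx⟩
  exact hxv (mem_singleton.1 this).symm

end IsSeparated

section Reduction

variable {n k : ℕ} {A B : Finset ℕ}

lemma card_inter_le_card_Aset_inter (hA : IsSeparated n k A) (hB : IsSeparated n k B)
    (hmin : ∀ x ∈ A ∩ B, ∃ i ∈ Icc 1 k, x ∈ Xblock n i ∧ x = vmin n i) :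
    (A ∩ B).card ≤ (Aset n k A ∩ Aset n k B).card := by
  refine (card_le_card (t := (Aset n k A ∩ Aset n k B).image (vmin n)) fun x hx => ?_).trans
    card_image_le
  obtain ⟨i, hi, hxi, rfl⟩ := hmin x hx
  obtain ⟨hxA, hxB⟩ := mem_inter.1 hx
  refine mem_image.2 ⟨i, mem_inter.2 ⟨?_, ?_⟩, rfl⟩
  · exact mem_Aset.2 ⟨hi, hA.inter_Xblock_eq_singleton hi hxA hxi⟩
  · exact mem_Aset.2 ⟨hi, hB.inter_Xblock_eq_singleton hi hxB hxi⟩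

lemma exists_mem_card_inter_lt {G : Finset (Finset ℕ)} (hG : IsBlockShifted n k G)
    (hA : IsSeparated n k A) (hB : IsSeparated n k B) (hBG : B ∈ G) {i x : ℕ}
    (hi : i ∈ Icc 1 k) (hxA : x ∈ A) (hxB : x ∈ B) (hx : x ∈ Xblock n i) (hxv : x ≠ vmin n i) :
    ∃ B' ∈ G, (A ∩ B').card < (A ∩ B).card ∧
      Aset n k A ∩ Aset n k B' ⊆ Aset n k A ∩ Aset n k B := by
  have hv := vmin_mem_Xblock hx
  have hvA := hA.vmin_notMem hi hxA hx hxv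
  have hshift := hG _ _ (lt_of_le_of_ne (vmin_le_of_mem_Xblock hx) (Ne.symm hxv)) ⟨i, hi, hv, hx⟩
  refine ⟨insert (vmin n i) (B.erase x),
    mem_of_shiftFam_eq hshift hBG hxB (hB.vmin_notMem hi hxB hx hxv), ?_, ?_⟩
  · refine (card_le_card fun y hy => ?_).trans_lt (card_erase_lt_of_mem (mem_inter.2 ⟨hxA, hxB⟩))
    obtain ⟨hyA, hy⟩ := mem_inter.1 hy
    rcases mem_insert.1 hy with rfl | hy
    · exact absurd hyA hvA
    · exact mem_erase.2 ⟨(mem_erase.1 hy).1, mem_inter.2 ⟨hyA, (mem_erase.1 hy).2⟩⟩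
  · intro j hj
    obtain ⟨hjA, hjB'⟩ := mem_inter.1 hj
    have hji : j ≠ i := by
      rintro rfl
      exact hvA (mem_inter.1 (vmin_mem_of_mem_Aset hjA)).1
    obtain ⟨hjk, hjB'⟩ := mem_Aset.1 hjB'
    rw [insert_erase_inter_Xblock hv hx hji] at hjB'
    exact mem_inter.2 ⟨hjA, mem_Aset.2 ⟨hjk, hjB'⟩⟩

theorem le_card_Aset_inter_of_isBlockShifted {G : Finset (Finset ℕ)} {t : ℕ}
    (hG : IsBlockShifted n k G) (hGsep : ∀ B ∈ G, IsSeparated n k B)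
    (hAsub : A ⊆ Icc 1 (n * k)) (hA : IsSeparated n k A) (hcross : ∀ B ∈ G, t ≤ (A ∩ B).card) :
    ∀ B ∈ G, t ≤ (Aset n k A ∩ Aset n k B).card := by
  intro B hBG
  induction hc : (A ∩ B).card using Nat.strong_induction_on generalizing B with
  | _ c ih =>
    by_cases hmin : ∀ x ∈ A ∩ B, ∃ i ∈ Icc 1 k, x ∈ Xblock n i ∧ x = vmin n i
    · exact (hcross B hBG).trans (card_inter_le_card_Aset_inter hA (hGsep B hBG) hmin)
    · push Not at hmin
      obtain ⟨x, hx, hxmin⟩ := hmin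
      obtain ⟨hxA, hxB⟩ := mem_inter.1 hx
      obtain ⟨i, hi, hxi⟩ := exists_mem_Xblock (hAsub hxA)
      obtain ⟨B', hB'G, hlt, hsub⟩ := exists_mem_card_inter_lt hG hA (hGsep B hBG) hBG hi
        hxA hxB hxi (hxmin i hi hxi)
      exact (ih _ (hc ▸ hlt) B' hB'G rfl).trans (card_le_card hsub)

end Reduction

theorem reduction_lemma_general (n k l l' t : ℕ)
    (F G : Finset (Finset ℕ))
    (hF : F ⊆ Hfam n k l) (hG : G ⊆ Hfam n k l')
    (hGshift : ∀ i j, i < j → (∃ b ∈ Finset.Icc 1 k, i ∈ Xblock n b ∧ j ∈ Xblock n b) →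
      shiftFam i j G = G)
    (hcross : ∀ A ∈ F, ∀ B ∈ G, t ≤ (A ∩ B).card) :
    (∀ A ∈ F.image (Aset n k), A ⊆ Finset.Icc 1 k ∧ A.card ≤ l) ∧
    (∀ B ∈ G.image (Aset n k), B ⊆ Finset.Icc 1 k ∧ B.card ≤ l') ∧
    (∀ A ∈ F.image (Aset n k), ∀ B ∈ G.image (Aset n k), t ≤ (A ∩ B).card) := by
  have hsize : ∀ {l : ℕ} {H : Finset ℕ}, H ∈ Hfam n k l →
      Aset n k H ⊆ Icc 1 k ∧ (Aset n k H).card ≤ l :=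
    fun hH => ⟨filter_subset _ _, (card_Aset_le n k _).trans (mem_Hfam.1 hH).2.1.le⟩
  simp only [forall_mem_image]
  refine ⟨fun A hA => hsize (hF hA), fun B hB => hsize (hG hB), fun A hA B hB => ?_⟩
  obtain ⟨hAsub, -, hAsep⟩ := mem_Hfam.1 (hF hA)
  exact le_card_Aset_inter_of_isBlockShifted hGshift (fun B hB => (mem_Hfam.1 (hG hB)).2.2)
    hAsub hAsep (hcross A hA) B hB

theorem reduction_lemma (n k l l' t : ℕ)
    (hn : 1 ≤ n) (hkl : l ≤ k) (hll : l' ≤ l) (ht : 1 ≤ t)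
    (F G : Finset (Finset ℕ))
    (hF : F ⊆ Hfam n k l) (hG : G ⊆ Hfam n k l')
    (hFshift : ∀ i j, i < j → (∃ b ∈ Finset.Icc 1 k, i ∈ Xblock n b ∧ j ∈ Xblock n b) →
      shiftFam i j F = F)
    (hGshift : ∀ i j, i < j → (∃ b ∈ Finset.Icc 1 k, i ∈ Xblock n b ∧ j ∈ Xblock n b) →
      shiftFam i j G = G)
    (hcross : ∀ A ∈ F, ∀ B ∈ G, t ≤ (A ∩ B).card) :
    (∀ A ∈ F.image (Aset n k), A ⊆ Finset.Icc 1 k ∧ A.card ≤ l) ∧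
    (∀ B ∈ G.image (Aset n k), B ⊆ Finset.Icc 1 k ∧ B.card ≤ l') ∧
    (∀ A ∈ F.image (Aset n k), ∀ B ∈ G.image (Aset n k), t ≤ (A ∩ B).card) :=
  reduction_lemma_general n k l l' t F G hF hG hGshift hcross
end
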